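/- arXiv:1804.02203 — 14 statements merged into one kernel-verified Lean document; each statement's English description precedes it below -/
import Mathlib

section
/- Polar decomposition: let M be a von Neumann algebra on a complex Hilbert space H and let a ∈ M. Then there exists u ∈ M such that u is a partial isometry (u u* u = u), a = u · √(a* a), and u* · a = √(a* a). -/
/-!
Write `|a| = √(star a * a)` (`CFC.abs a`). Since `star |a| * |a| = star a * a`, we have
`‖|a| x‖ = ‖a x‖`, so `|a| x ↦ a x` is a well-defined isometry on the range of `|a|`. Extending it
by continuity to the closure of that range and by zero on its orthogonal complement gives `u` with
`u * |a| = a`, and `star u * u` is the projection onto the closure of the range, which yields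
`u * star u * u = u` and `star u * a = |a|`.

To see `u ∈ M` we use `M = M''`. An operator `b` of the commutant commutes with `|a|`, hence
preserves `ker |a| = (range |a|)ᗮ`; so `u * b` and `b * u` agree on the range of `|a|` (where both
give `b * a`) and vanish on its orthogonal complement.
-/

open ContinuousLinearMap

namespace ContinuousLinearMap

theorem norm_apply_eq_of_adjoint_comp_self_eq {𝕜 E F G : Type*} [RCLike 𝕜]
    [NormedAddCommGroup E] [InnerProductSpace 𝕜 E] [CompleteSpace E]
    [NormedAddCommGroup F] [InnerProductSpace 𝕜 F] [CompleteSpace F]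
    [NormedAddCommGroup G] [InnerProductSpace 𝕜 G] [CompleteSpace G]
    {A : E →L[𝕜] F} {B : E →L[𝕜] G} (h : adjoint A ∘L A = adjoint B ∘L B) (x : E) :
    ‖A x‖ = ‖B x‖ := by
  rw [apply_norm_eq_sqrt_inner_adjoint_left, apply_norm_eq_sqrt_inner_adjoint_left, h]

section PolarFactor

variable {𝕜 E F G : Type*} [RCLike 𝕜]
  [NormedAddCommGroup E] [NormedSpace 𝕜 E]
  [NormedAddCommGroup F] [InnerProductSpace 𝕜 F] [CompleteSpace F]
  [NormedAddCommGroup G] [InnerProductSpace 𝕜 G] [CompleteSpace G]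

noncomputable def codRestrictClosure (p : E →L[𝕜] G) : E →ₗ[𝕜] p.range.topologicalClosure :=
  (p : E →ₗ[𝕜] G).codRestrict _ fun x ↦ p.range.le_topologicalClosure ⟨x, rfl⟩

omit [CompleteSpace G] in
lemma denseRange_codRestrictClosure (p : E →L[𝕜] G) : DenseRange p.codRestrictClosure := by
  have h : DenseRange (Set.inclusion p.range.le_topologicalClosure) :=
    (denseRange_inclusion_iff _).2 (p.range.topologicalClosure_coe).subset
  exact h.comp (LinearMap.surjective_rangeRestrict (p : E →ₗ[𝕜] G)).denseRange (by fun_prop)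

variable {a : E →L[𝕜] F} {p : E →L[𝕜] G}

omit [CompleteSpace G] in
lemma extendOfNorm_codRestrictClosure_apply (h : ∀ x, ‖a x‖ = ‖p x‖) (x : E) :
    (a : E →ₗ[𝕜] F).extendOfNorm p.codRestrictClosure (p.codRestrictClosure x) = a x :=
  LinearMap.extendOfNorm_eq p.denseRange_codRestrictClosure
    ⟨1, fun x ↦ (one_mul ‖p x‖).symm ▸ (h x).le⟩ x

omit [CompleteSpace G] in
lemma norm_extendOfNorm_codRestrictClosure_apply (h : ∀ x, ‖a x‖ = ‖p x‖)
    (y : p.range.topologicalClosure) :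
    ‖(a : E →ₗ[𝕜] F).extendOfNorm p.codRestrictClosure y‖ = ‖y‖ := by
  refine p.denseRange_codRestrictClosure.induction_on y
    (isClosed_eq (by fun_prop) continuous_norm) fun x ↦ ?_
  rw [extendOfNorm_codRestrictClosure_apply h]
  exact h x

variable (a p) in
noncomputable def polarFactor : G →L[𝕜] F :=
  (a : E →ₗ[𝕜] F).extendOfNorm p.codRestrictClosure ∘L
    p.range.topologicalClosure.orthogonalProjectionOnto

lemma polarFactor_apply_apply (h : ∀ x, ‖a x‖ = ‖p x‖) (x : E) : polarFactor a p (p x) = a x := by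
  have hx : p.range.topologicalClosure.orthogonalProjectionOnto (p x) = p.codRestrictClosure x :=
    Submodule.orthogonalProjectionOnto_mem_subspace_eq_self (p.codRestrictClosure x)
  rw [polarFactor, comp_apply, hx, extendOfNorm_codRestrictClosure_apply h]

lemma polarFactor_comp (h : ∀ x, ‖a x‖ = ‖p x‖) : polarFactor a p ∘L p = a := by
  ext x
  exact polarFactor_apply_apply h x

lemma polarFactor_apply_of_mem_orthogonal {y : G} (hy : y ∈ p.rangeᗮ) :
    polarFactor a p y = 0 := by
  rw [← Submodule.orthogonal_closure] at hy
  rw [polarFactor, comp_apply, Submodule.orthogonalProjectionOnto_apply_of_mem_orthogonal hy,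
    map_zero]

lemma adjoint_polarFactor_comp_self (h : ∀ x, ‖a x‖ = ‖p x‖) :
    adjoint (polarFactor a p) ∘L polarFactor a p = p.range.topologicalClosure.starProjection := by
  have hv := ((a : E →ₗ[𝕜] F).extendOfNorm p.codRestrictClosure).norm_map_iff_adjoint_comp_self.1
    (norm_extendOfNorm_codRestrictClosure_apply h)
  rw [polarFactor, adjoint_comp, comp_assoc,
    ← comp_assoc _ _ (Submodule.orthogonalProjectionOnto _), hv, one_def, id_comp,
    Submodule.adjoint_orthogonalProjectionOnto, Submodule.starProjection]

lemma polarFactor_comp_starProjection :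
    polarFactor a p ∘L p.range.topologicalClosure.starProjection = polarFactor a p := by
  ext y
  rw [comp_apply, polarFactor, comp_apply, comp_apply, Submodule.starProjection, comp_apply,
    Submodule.subtypeL_apply, Submodule.orthogonalProjectionOnto_mem_subspace_eq_self]

lemma polarFactor_comp_adjoint_comp_self (h : ∀ x, ‖a x‖ = ‖p x‖) :
    polarFactor a p ∘L adjoint (polarFactor a p) ∘L polarFactor a p = polarFactor a p := by
  rw [adjoint_polarFactor_comp_self h, polarFactor_comp_starProjection]

lemma adjoint_polarFactor_comp (h : ∀ x, ‖a x‖ = ‖p x‖) :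
    adjoint (polarFactor a p) ∘L a = p := by
  ext x
  rw [comp_apply, ← polarFactor_apply_apply h x, ← comp_apply (adjoint _),
    adjoint_polarFactor_comp_self h]
  exact Submodule.starProjection_eq_self_iff.2 (p.range.le_topologicalClosure ⟨x, rfl⟩)

end PolarFactor

theorem eq_zero_of_comp_eq_zero_of_orthogonal_range {𝕜 E F G : Type*} [RCLike 𝕜]
    [NormedAddCommGroup E] [NormedSpace 𝕜 E] [NormedAddCommGroup F] [NormedSpace 𝕜 F]
    [NormedAddCommGroup G] [InnerProductSpace 𝕜 G] [CompleteSpace G]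
    {w : G →L[𝕜] F} {p : E →L[𝕜] G} (hwp : w ∘L p = 0) (hw : ∀ y ∈ p.rangeᗮ, w y = 0) :
    w = 0 := by
  have hrange : p.range.topologicalClosure ≤ w.ker :=
    Submodule.topologicalClosure_minimal _ (by rintro _ ⟨x, rfl⟩; exact congr($hwp x))
      w.isClosed_ker
  have horth : p.range.topologicalClosureᗮ ≤ w.ker := by
    rw [Submodule.orthogonal_closure]; exact hw
  have htop : p.range.topologicalClosure ⊔ p.range.topologicalClosureᗮ = ⊤ :=
    Submodule.sup_orthogonal_of_hasOrthogonalProjection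
  ext y
  exact (htop ▸ sup_le hrange horth : ⊤ ≤ w.ker) Submodule.mem_top

theorem norm_cfcAbs_apply {H : Type*} [NormedAddCommGroup H] [InnerProductSpace ℂ H]
    [CompleteSpace H] (a : H →L[ℂ] H) (x : H) : ‖CFC.abs a x‖ = ‖a x‖ :=
  norm_apply_eq_of_adjoint_comp_self_eq
    (by rw [← star_eq_adjoint, (CFC.abs_nonneg a).isSelfAdjoint.star_eq]; exact CFC.abs_mul_abs a) x

end ContinuousLinearMap

namespace VonNeumannAlgebra

variable {H : Type*} [NormedAddCommGroup H] [InnerProductSpace ℂ H] [CompleteSpace H]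
  {M : VonNeumannAlgebra H}

theorem cfcAbs_mem {a : H →L[ℂ] H} (ha : a ∈ M) : CFC.abs a ∈ M := by
  rw [← M.commutant_commutant, mem_commutant_iff]
  intro b hb
  have hbM : ∀ m ∈ M, Commute m b := mem_commutant_iff.1 hb
  exact (((hbM _ (star_mem ha)).mul_left (hbM a ha)).cfcₙ_nnreal NNReal.sqrt).eq.symm

theorem mem_of_mul_eq {a p u : H →L[ℂ] H} (ha : a ∈ M) (hp : p ∈ M) (hp_sa : IsSelfAdjoint p)
    (hu : u * p = a) (hu_orth : ∀ y ∈ p.rangeᗮ, u y = 0) : u ∈ M := by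
  rw [← M.commutant_commutant, mem_commutant_iff]
  intro b hb
  have hbM : ∀ m ∈ M, Commute m b := mem_commutant_iff.1 hb
  have hb_orth : ∀ y ∈ p.rangeᗮ, b y ∈ p.rangeᗮ := by
    simp only [hp_sa.isStarNormal.orthogonal_range, LinearMap.mem_ker, coe_coe]
    intro y hy
    rw [← mul_apply_eq_comp, (hbM p hp).eq, mul_apply_eq_comp, hy, map_zero]
  refine (sub_eq_zero.1 (eq_zero_of_comp_eq_zero_of_orthogonal_range (p := p) ?_ ?_)).symm
  · change (u * b - b * u) * p = 0
    rw [sub_mul, mul_assoc, ← (hbM p hp).eq, ← mul_assoc, hu, mul_assoc, hu, (hbM a ha).eq,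
      sub_self]
  · intro y hy
    rw [sub_apply, mul_apply_eq_comp, mul_apply_eq_comp, hu_orth y hy, hu_orth _ (hb_orth y hy),
      map_zero, sub_zero]

end VonNeumannAlgebra

/-- **Polar decomposition** in a von Neumann algebra: for every `a` in a von Neumann algebra `M`
on a complex Hilbert space `H` there is a partial isometry `u ∈ M` with
`a = u * √(a* a)` and `u* * a = √(a* a)`. -/
theorem vonNeumannAlgebra_polar_decomposition
    {H : Type*} [NormedAddCommGroup H] [InnerProductSpace ℂ H] [CompleteSpace H]
    (M : VonNeumannAlgebra H) (a : H →L[ℂ] H) (ha : a ∈ M) :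
    ∃ u : H →L[ℂ] H, u ∈ M ∧ u * star u * u = u ∧
      a = u * CFC.sqrt (star a * a) ∧ star u * a = CFC.sqrt (star a * a) := by
  have hnorm (x : H) : ‖a x‖ = ‖CFC.abs a x‖ := (norm_cfcAbs_apply a x).symm
  refine ⟨polarFactor a (CFC.abs a), ?_, ?_, (polarFactor_comp hnorm).symm,
    adjoint_polarFactor_comp hnorm⟩
  · exact VonNeumannAlgebra.mem_of_mul_eq ha (VonNeumannAlgebra.cfcAbs_mem ha)
      (CFC.abs_nonneg a).isSelfAdjoint (polarFactor_comp hnorm)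
      fun _ ↦ polarFactor_apply_of_mem_orthogonal
  · rw [mul_assoc]
    exact polarFactor_comp_adjoint_comp_self hnorm
end

section
/- Douglas-type factorisation in a von Neumann algebra: let M be a von Neumann algebra on a complex Hilbert space H, let a, b ∈ M, and let λ ≥ 0. Then there exists c ∈ M with ‖c‖ ≤ λ and a = c · b if and only if a* a ≤ λ² · (b* b). -/
/-!
If `‖a ξ‖ ≤ l ‖b ξ‖` for all `ξ` (which is what `a* a ≤ l² b* b` says), then `b ξ ↦ a ξ` is a
well-defined map of norm at most `l` on the range of `b`; extend it to the closure of the range and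
by zero on the orthogonal complement. The resulting `c` is the unique operator with `c b = a` that
vanishes on `(range b)ᗮ = ker b*`. Every `x` in the commutant of `M` commutes with `a`, `b` and
`b*`, so `x c - c x` also kills both `range b` and `ker b*`, hence vanishes, and `c ∈ M'' = M`.
-/

open ContinuousLinearMap

namespace ContinuousLinearMap

section Factorisation

variable {𝕜 E F G : Type*} [RCLike 𝕜] [NormedAddCommGroup E] [NormedSpace 𝕜 E]
  [NormedAddCommGroup F] [InnerProductSpace 𝕜 F] [CompleteSpace F]
  [NormedAddCommGroup G] [NormedSpace 𝕜 G]

theorem eq_zero_of_comp_eq_zero_of_orthogonal_range_s3 {d : F →L[𝕜] G} {b : E →L[𝕜] F}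
    (hdb : d ∘L b = 0) (hd : ∀ y ∈ (LinearMap.range (b : E →ₗ[𝕜] F))ᗮ, d y = 0) : d = 0 := by
  set K := (LinearMap.range (b : E →ₗ[𝕜] F)).topologicalClosure
  have hK : K ≤ LinearMap.ker (d : F →ₗ[𝕜] G) := by
    refine Submodule.topologicalClosure_minimal _ ?_ (isClosed_ker d)
    rintro _ ⟨x, rfl⟩
    exact congr($hdb x)
  have hKperp : Kᗮ ≤ LinearMap.ker (d : F →ₗ[𝕜] G) := by
    rw [Submodule.orthogonal_closure]
    exact hd
  have htop : LinearMap.ker (d : F →ₗ[𝕜] G) = ⊤ := by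
    rw [eq_top_iff, ← Submodule.sup_orthogonal_of_hasOrthogonalProjection (K := K)]
    exact sup_le hK hKperp
  exact coe_injective (LinearMap.ker_eq_top.mp htop)

theorem exists_comp_eq_of_norm_le [CompleteSpace G] (a : E →L[𝕜] G) (b : E →L[𝕜] F) {l : ℝ}
    (hl : 0 ≤ l) (hab : ∀ x, ‖a x‖ ≤ l * ‖b x‖) :
    ∃ c : F →L[𝕜] G, ‖c‖ ≤ l ∧ c ∘L b = a ∧
      ∀ y ∈ (LinearMap.range (b : E →ₗ[𝕜] F))ᗮ, c y = 0 := by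
  set K := (LinearMap.range (b : E →ₗ[𝕜] F)).topologicalClosure
  let e : E →ₗ[𝕜] K := (b : E →ₗ[𝕜] F).codRestrict K
    fun x ↦ Submodule.le_topologicalClosure _ (LinearMap.mem_range_self (b : E →ₗ[𝕜] F) x)
  have he : DenseRange e := by
    rw [DenseRange, Subtype.dense_iff, ← Set.range_comp]
    show (K : Set F) ⊆ closure (Set.range b)
    rw [Submodule.topologicalClosure_coe, LinearMap.coe_range]
    rfl
  have hae : ∀ x, ‖(a : E →ₗ[𝕜] G) x‖ ≤ l * ‖e x‖ := hab
  let g : K →L[𝕜] G := (a : E →ₗ[𝕜] G).extendOfNorm e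
  refine ⟨g ∘L K.orthogonalProjectionOnto, ?_, ?_, ?_⟩
  · calc ‖g ∘L K.orthogonalProjectionOnto‖ ≤ ‖g‖ * ‖K.orthogonalProjectionOnto‖ :=
          opNorm_comp_le _ _
      _ ≤ l * 1 := mul_le_mul (LinearMap.opNorm_extendOfNorm_le he hl hae)
          (Submodule.orthogonalProjectionOnto_norm_le K) (norm_nonneg _) hl
      _ = l := mul_one l
  · ext x
    have hbx : K.orthogonalProjectionOnto (b x) = e x :=
      Submodule.orthogonalProjectionOnto_mem_subspace_eq_self (e x)
    rw [comp_apply, comp_apply, hbx]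
    exact LinearMap.extendOfNorm_eq he ⟨l, hae⟩ x
  · intro y hy
    rw [← Submodule.orthogonal_closure] at hy
    rw [comp_apply, Submodule.orthogonalProjectionOnto_apply_of_mem_orthogonal hy, map_zero]

end Factorisation

section Endomorphisms

variable {𝕜 H : Type*} [RCLike 𝕜] [NormedAddCommGroup H] [InnerProductSpace 𝕜 H]
  [CompleteSpace H]

theorem star_mul_self_le_smul_star_mul_self_iff (a b : H →L[𝕜] H) (r : ℝ) :
    star a * a ≤ (r : 𝕜) • (star b * b) ↔ ∀ x, ‖a x‖ ^ 2 ≤ r * ‖b x‖ ^ 2 := by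
  have hsa : IsSelfAdjoint ((r : 𝕜) • (star b * b) - star a * a) :=
    (IsSelfAdjoint.smul (RCLike.conj_ofReal r) (.star_mul_self b)).sub (.star_mul_self a)
  have hre : ∀ x, ((r : 𝕜) • (star b * b) - star a * a).reApplyInnerSelf x =
      r * ‖b x‖ ^ 2 - ‖a x‖ ^ 2 := by
    intro x
    simp [reApplyInnerSelf_apply, inner_sub_left, inner_smul_left,
      apply_norm_sq_eq_inner_adjoint_left, star_eq_adjoint]
  simp only [le_def, isPositive_def', hsa, true_and, hre, sub_nonneg]

theorem commute_of_mul_eq_of_orthogonal_range {a b c x : H →L[𝕜] H} (hcb : c * b = a)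
    (hc : ∀ y ∈ (LinearMap.range (b : H →ₗ[𝕜] H))ᗮ, c y = 0)
    (ha : Commute x a) (hb : Commute x b) (hb' : Commute x (star b)) : Commute x c := by
  refine sub_eq_zero.mp (eq_zero_of_comp_eq_zero_of_orthogonal_range_s3 (b := b) ?_ fun y hy ↦ ?_)
  · change (x * c - c * x) * b = 0
    rw [sub_mul, mul_assoc, mul_assoc, hcb, hb.eq, ← mul_assoc, hcb, ha.eq, sub_self]
  · have hker : ∀ z ∈ (LinearMap.range (b : H →ₗ[𝕜] H))ᗮ, star b z = 0 := fun z hz ↦ by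
      rwa [orthogonal_range, LinearMap.mem_ker] at hz
    have hxy : x y ∈ (LinearMap.range (b : H →ₗ[𝕜] H))ᗮ := by
      rw [orthogonal_range, LinearMap.mem_ker]
      change (star b * x) y = 0
      rw [← hb'.eq, mul_apply_eq_comp, hker y hy, map_zero]
    rw [sub_apply, mul_apply_eq_comp, mul_apply_eq_comp, hc y hy, hc _ hxy, map_zero, sub_zero]

end Endomorphisms

end ContinuousLinearMap

/-- **Douglas-type factorisation** in a von Neumann algebra: for `a, b` in a von Neumann
algebra `M` on a complex Hilbert space `H` and `0 ≤ λ`, there is `c ∈ M` with `‖c‖ ≤ λ` and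
`a = c * b` if and only if `a* a ≤ λ² (b* b)`. -/
theorem vonNeumannAlgebra_douglas_factorisation
    {H : Type*} [NormedAddCommGroup H] [InnerProductSpace ℂ H] [CompleteSpace H]
    (M : VonNeumannAlgebra H) (a b : H →L[ℂ] H) (ha : a ∈ M) (hb : b ∈ M)
    (l : ℝ) (hl : 0 ≤ l) :
    (∃ c : H →L[ℂ] H, c ∈ M ∧ ‖c‖ ≤ l ∧ a = c * b) ↔
      star a * a ≤ ((l : ℂ) ^ 2) • (star b * b) := by
  have hnorm : (∀ x, ‖a x‖ ^ 2 ≤ l ^ 2 * ‖b x‖ ^ 2) ↔ ∀ x, ‖a x‖ ≤ l * ‖b x‖ :=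
    forall_congr' fun x ↦ by
      rw [← mul_pow]
      exact pow_le_pow_iff_left₀ (norm_nonneg _) (by positivity) two_ne_zero
  have hle : star a * a ≤ ((l : ℂ) ^ 2) • (star b * b) ↔ ∀ x, ‖a x‖ ≤ l * ‖b x‖ := by
    rw [← hnorm, ← Complex.ofReal_pow]
    exact star_mul_self_le_smul_star_mul_self_iff a b (l ^ 2)
  rw [hle]
  constructor
  · rintro ⟨c, -, hc, rfl⟩ x
    exact c.le_of_opNorm_le hc (b x)
  · intro hab
    obtain ⟨c, hc, hcb, hker⟩ := exists_comp_eq_of_norm_le a b hl hab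
    refine ⟨c, ?_, hc, hcb.symm⟩
    rw [← M.commutant_commutant, VonNeumannAlgebra.mem_commutant_iff]
    intro x hx
    rw [VonNeumannAlgebra.mem_commutant_iff] at hx
    exact (commute_of_mul_eq_of_orthogonal_range hcb hker (hx a ha).symm (hx b hb).symm
      (hx _ (star_mem hb)).symm).eq
end

section
/- Let A be a unital C*-algebra and τ : A → ℂ a faithful positive linear functional. Assume that every bounded-above ascending sequence a₁ ≤ a₂ ≤ ⋯ of self-adjoint elements of A has a least upper bound a among the self-adjoint elements of A, and that τ(a) = sup_n τ(a_n) for every such sequence. Then every nonempty upward-directed, bounded-above set D of self-adjoint elements of A has a least upper bound s among the self-adjoint elements of A, and τ(s) = sup_{d ∈ D} τ(d). -/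
open scoped ComplexOrder

private noncomputable def chainAux {α : Type*} (init : α) {P : ℕ → α → α → Prop}
    (h : ∀ (n : ℕ) (a : α), ∃ b, P n a b) : ℕ → α
  | 0 => init
  | n + 1 => (h n (chainAux init h n)).choose

private theorem chainAux_succ {α : Type*} (init : α) {P : ℕ → α → α → Prop}
    (h : ∀ (n : ℕ) (a : α), ∃ b, P n a b) (n : ℕ) :
    P n (chainAux init h n) (chainAux init h (n + 1)) := (h n _).choose_spec

/-- If a unital C*-algebra `A` with a faithful positive functional `τ` has least upper bounds
(among self-adjoint elements) of bounded-above ascending sequences of self-adjoint elements,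
and `τ` preserves these sequential suprema, then every nonempty upward-directed bounded-above
set of self-adjoint elements has a least upper bound among the self-adjoint elements, and `τ`
preserves it. -/
theorem directed_sup_of_sequential_sup
    {A : Type*} [CStarAlgebra A] [PartialOrder A] [StarOrderedRing A]
    (τ : A →ₗ[ℂ] ℂ)
    (hpos : ∀ a : A, 0 ≤ a → 0 ≤ τ a)
    (hfaithful : ∀ a : A, 0 ≤ a → τ a = 0 → a = 0)
    (hseq : ∀ a : ℕ → A, Monotone a → (∀ n, IsSelfAdjoint (a n)) →
      (∃ u : A, IsSelfAdjoint u ∧ ∀ n, a n ≤ u) →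
      ∃ s : A, IsSelfAdjoint s ∧ (∀ n, a n ≤ s) ∧
        (∀ t : A, IsSelfAdjoint t → (∀ n, a n ≤ t) → s ≤ t) ∧
        IsLUB (Set.range fun n => τ (a n)) (τ s)) :
    ∀ D : Set A, D.Nonempty → (∀ x ∈ D, IsSelfAdjoint x) → DirectedOn (· ≤ ·) D →
      (∃ u : A, IsSelfAdjoint u ∧ ∀ x ∈ D, x ≤ u) →
      ∃ s : A, IsSelfAdjoint s ∧ (∀ x ∈ D, x ≤ s) ∧
        (∀ t : A, IsSelfAdjoint t → (∀ x ∈ D, x ≤ t) → s ≤ t) ∧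
        IsLUB (τ '' D) (τ s) := by
  intro D hne hDsa hdir hbound
  classical
  obtain ⟨u, hu_sa, hu⟩ := hbound
  obtain ⟨d0, hd0⟩ := hne
  have hmono : ∀ {x y : A}, x ≤ y → τ x ≤ τ y := by
    intro x y h
    have h1 := hpos _ (sub_nonneg.mpr h)
    rw [map_sub] at h1
    exact sub_nonneg.mp h1
  set M : ℝ := sSup ((fun x => (τ x).re) '' D) with hM
  have hbdd : BddAbove ((fun x => (τ x).re) '' D) := by
    refine ⟨(τ u).re, ?_⟩
    rintro _ ⟨x, hx, rfl⟩
    exact (Complex.le_def.mp (hmono (hu x hx))).1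
  have hreM : ∀ x ∈ D, (τ x).re ≤ M := fun x hx => le_csSup hbdd ⟨x, hx, rfl⟩
  have key : ∀ c ∈ D, ∀ n : ℕ, ∃ x, x ∈ D ∧ c ≤ x ∧ M - 1 / (n + 1) < (τ x).re := by
    intro c hc n
    have h1 : M - 1 / (n + 1 : ℝ) < M := sub_lt_self _ (by positivity)
    obtain ⟨y, ⟨z, hz, rfl⟩, hy⟩ := exists_lt_of_lt_csSup (Set.Nonempty.image _ ⟨d0, hd0⟩) h1
    obtain ⟨x, hxD, hcx, hzx⟩ := hdir c hc z hz
    exact ⟨x, hxD, hcx, hy.trans_le (Complex.le_def.mp (hmono hzx)).1⟩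
  -- build a monotone sequence in D whose τ-real parts approach M
  have hP : ∀ (n : ℕ) (p : {x : A // x ∈ D}), ∃ q : {x : A // x ∈ D},
      p.1 ≤ q.1 ∧ M - 1 / (n + 1 + 1) < (τ q.1).re := by
    intro n p
    obtain ⟨x, hx, h1, h2⟩ := key p.1 p.2 (n + 1)
    refine ⟨⟨x, hx⟩, h1, ?_⟩
    convert h2 using 3
    push_cast
    ring
  set f : ℕ → {x : A // x ∈ D} := chainAux ⟨d0, hd0⟩ hP with hf
  set d : ℕ → A := fun n => (f n).1 with hd
  have hdD : ∀ n, d n ∈ D := fun n => (f n).2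
  have hdstep : ∀ n, d n ≤ d (n + 1) ∧ M - 1 / (n + 1 + 1) < (τ (d (n + 1))).re :=
    fun n => chainAux_succ _ hP n
  have hdmono : Monotone d := monotone_nat_of_le_succ fun n => (hdstep n).1
  obtain ⟨s, hs_sa, hs_ub, hs_least, hs_lub⟩ :=
    hseq d hdmono (fun n => hDsa _ (hdD n)) ⟨u, hu_sa, fun n => hu _ (hdD n)⟩
  have hτds : ∀ n, τ (d n) ≤ τ s := fun n => hs_lub.1 ⟨n, rfl⟩
  have hd00 : d 0 = d0 := rfl
  have him0 : ∀ x ∈ D, (τ x).im = (τ d0).im := by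
    intro x hx
    obtain ⟨z, hz, h1, h2⟩ := hdir x hx d0 hd0
    rw [(Complex.le_def.mp (hmono h1)).2, (Complex.le_def.mp (hmono h2)).2]
  have hims : (τ s).im = (τ d0).im := by
    have := (Complex.le_def.mp (hτds 0)).2
    rw [hd00] at this
    exact this.symm
  have hres : M ≤ (τ s).re := by
    by_contra h
    push_neg at h
    obtain ⟨n, hn⟩ := exists_nat_one_div_lt (sub_pos.mpr h)
    have h2 := (hdstep n).2
    have h3 := (Complex.le_def.mp (hτds (n + 1))).1
    have h4 : (1 : ℝ) / (n + 1 + 1) ≤ 1 / (n + 1) :=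
      one_div_le_one_div_of_le (by positivity) (by linarith)
    linarith
  -- τ s is an upper bound of τ '' D
  have hτs_ub : ∀ x ∈ D, τ x ≤ τ s :=
    fun x hx => Complex.le_def.mpr ⟨(hreM x hx).trans hres, (him0 x hx).trans hims.symm⟩
  -- s is an upper bound of D
  have hs_ubD : ∀ x ∈ D, x ≤ s := by
    intro x hx
    obtain ⟨e0, he0D, hxe0, hde0⟩ := hdir x hx (d 0) (hdD 0)
    have hQ : ∀ (n : ℕ) (p : {x : A // x ∈ D}), ∃ q : {x : A // x ∈ D},
        p.1 ≤ q.1 ∧ d (n + 1) ≤ q.1 := by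
      intro n p
      obtain ⟨y, hy, h1, h2⟩ := hdir p.1 p.2 (d (n + 1)) (hdD (n + 1))
      exact ⟨⟨y, hy⟩, h1, h2⟩
    set g : ℕ → {x : A // x ∈ D} := chainAux ⟨e0, he0D⟩ hQ with hg
    set e : ℕ → A := fun n => (g n).1 with he
    have heD : ∀ n, e n ∈ D := fun n => (g n).2
    have hestep : ∀ n, e n ≤ e (n + 1) ∧ d (n + 1) ≤ e (n + 1) :=
      fun n => chainAux_succ _ hQ n
    have hemono : Monotone e := monotone_nat_of_le_succ fun n => (hestep n).1
    have he0 : e 0 = e0 := rfl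
    have hde : ∀ n, d n ≤ e n := by
      intro n
      cases n with
      | zero => rw [he0]; exact hde0
      | succ n => exact (hestep n).2
    obtain ⟨s', hs'_sa, hs'_ub, hs'_least, hs'_lub⟩ :=
      hseq e hemono (fun n => hDsa _ (heD n)) ⟨u, hu_sa, fun n => hu _ (heD n)⟩
    have h1 : s ≤ s' := hs_least s' hs'_sa fun n => (hde n).trans (hs'_ub n)
    have h2 : τ s' ≤ τ s := by
      refine hs'_lub.2 ?_
      rintro _ ⟨n, rfl⟩
      exact hτs_ub _ (heD n)
    have h3 : τ (s' - s) = 0 := by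
      rw [map_sub]
      exact le_antisymm (sub_nonpos.mpr h2) (sub_nonneg.mpr (hmono h1))
    have h4 : s' = s := by
      have := hfaithful _ (sub_nonneg.mpr h1) h3
      rwa [sub_eq_zero] at this
    have hx0 : x ≤ e 0 := by rw [he0]; exact hxe0
    exact hx0.trans ((hs'_ub 0).trans_eq h4)
  refine ⟨s, hs_sa, hs_ubD, fun t ht hub => hs_least t ht fun n => hub _ (hdD n), ?_, ?_⟩
  · rintro _ ⟨x, hx, rfl⟩
    exact hτs_ub x hx
  · intro b hb
    refine hs_lub.2 ?_
    rintro _ ⟨n, rfl⟩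
    exact hb ⟨_, hdD n, rfl⟩
end

section
/- Let μ be a finite measure on a measurable space X. Then every nonempty upward-directed subset D of the real Banach lattice L^∞(μ) that is bounded above has a least upper bound s in L^∞(μ), and ∫ s dμ = sup_{f ∈ D} ∫ f dμ. Moreover, the integral is faithful on L^∞(μ): if f ∈ L^∞(μ) satisfies f ≥ 0 and ∫ f dμ = 0, then f = 0. -/
open MeasureTheory Filter Topology Set
open scoped ENNReal

/-!
A directed set `D` is exhausted, as far as integrals go, by one increasing sequence `g n` in `D`
whose integrals tend to `sup_{f ∈ D} ∫ f`. Its pointwise supremum `s` is again in `L^p` (it is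
squeezed between `g 0` and an upper bound of `D`), and by monotone convergence
`∫ s = sup_{f ∈ D} ∫ f`. Since the integral is strictly monotone on `L^p`, this maximality of
`∫ s` forces every `f ∈ D` below `s`.
-/

theorem DirectedOn.exists_monotone_seq_ge {β : Type*} [Preorder β] {D : Set β}
    (hD : DirectedOn (· ≤ ·) D) {u : ℕ → β} (hu : ∀ n, u n ∈ D) :
    ∃ g : ℕ → β, Monotone g ∧ (∀ n, g n ∈ D) ∧ ∀ n, u n ≤ g n := by
  choose! z hzD hz₁ hz₂ using hD
  let g : ℕ → β := fun n => Nat.rec (u 0) (fun k gk => z gk (u (k + 1))) n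
  have hgD : ∀ n, g n ∈ D := fun n => by
    induction n with
    | zero => exact hu 0
    | succ k ih => exact hzD _ ih _ (hu (k + 1))
  refine ⟨g, monotone_nat_of_le_succ fun n => hz₁ _ (hgD n) _ (hu (n + 1)), hgD, ?_⟩
  rintro (_ | n)
  · exact le_rfl
  · exact hz₂ _ (hgD n) _ (hu (n + 1))

namespace MeasureTheory

variable {α : Type*} [MeasurableSpace α] {μ : Measure α} {p : ℝ≥0∞}

theorem memLp_of_le_of_le {f g₁ g₂ : α → ℝ} (hf : AEStronglyMeasurable f μ)
    (h_le₁ : g₁ ≤ᵐ[μ] f) (h_le₂ : f ≤ᵐ[μ] g₂) (hg₁ : MemLp g₁ p μ) (hg₂ : MemLp g₂ p μ) :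
    MemLp f p μ :=
  (hg₁.norm.sup hg₂.norm).mono' hf <| by
    filter_upwards [h_le₁, h_le₂] with x hx₁ hx₂ using abs_le_max_abs_abs hx₁ hx₂

namespace Lp

theorem ae_monotone_coeFn {g : ℕ → Lp ℝ p μ} (hg : Monotone g) :
    ∀ᵐ x ∂μ, Monotone fun n => g n x := by
  filter_upwards [ae_all_iff.2 fun n => (coeFn_le _ _).2 (hg (Nat.le_succ n))] with x hx
  exact monotone_nat_of_le_succ hx

theorem exists_ae_tendsto_of_monotone {g : ℕ → Lp ℝ p μ} (hg : Monotone g)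
    (hbdd : BddAbove (range g)) :
    ∃ s : Lp ℝ p μ, ∀ᵐ x ∂μ, Tendsto (fun n => g n x) atTop (𝓝 (s x)) := by
  obtain ⟨b, hb⟩ := hbdd
  have hgb : ∀ᵐ x ∂μ, ∀ n, g n x ≤ b x :=
    ae_all_iff.2 fun n => (coeFn_le _ _).2 (hb (mem_range_self n))
  let S : α → ℝ := fun x => ⨆ n, g n x
  have hS_tendsto : ∀ᵐ x ∂μ, Tendsto (fun n => g n x) atTop (𝓝 (S x)) := by
    filter_upwards [ae_monotone_coeFn hg, hgb] with x hmono hle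
    exact tendsto_atTop_ciSup hmono ⟨b x, forall_mem_range.2 hle⟩
  have hS : MemLp S p μ := by
    refine memLp_of_le_of_le (aestronglyMeasurable_of_tendsto_ae _
      (fun n => Lp.aestronglyMeasurable (g n)) hS_tendsto) ?_ ?_ (Lp.memLp (g 0)) (Lp.memLp b)
    · filter_upwards [ae_monotone_coeFn hg, hS_tendsto] with x hmono hx
        using hmono.ge_of_tendsto hx 0
    · filter_upwards [hgb, hS_tendsto] with x hle hx using le_of_tendsto' hx hle
  refine ⟨hS.toLp S, ?_⟩
  filter_upwards [hS_tendsto, hS.coeFn_toLp] with x hx hSx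
  rwa [hSx]

theorem isLUB_range_of_ae_tendsto {g : ℕ → Lp ℝ p μ} (hg : Monotone g) {s : Lp ℝ p μ}
    (hs : ∀ᵐ x ∂μ, Tendsto (fun n => g n x) atTop (𝓝 (s x))) : IsLUB (range g) s := by
  refine ⟨forall_mem_range.2 fun n => (coeFn_le _ _).1 ?_, fun v hv => (coeFn_le _ _).1 ?_⟩
  · filter_upwards [ae_monotone_coeFn hg, hs] with x hmono hx using hmono.ge_of_tendsto hx n
  · filter_upwards [hs, ae_all_iff.2 fun n => (coeFn_le _ _).2 (hv (mem_range_self n))]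
      with x hx hle using le_of_tendsto' hx hle

variable [Fact (1 ≤ p)] [IsFiniteMeasure μ]

theorem integrable (f : Lp ℝ p μ) : Integrable f μ :=
  (Lp.memLp f).integrable Fact.out

theorem monotone_integral : Monotone fun f : Lp ℝ p μ => ∫ x, f x ∂μ :=
  fun f g hfg => integral_mono_ae (integrable f) (integrable g) ((coeFn_le f g).2 hfg)

theorem eq_of_le_of_integral_le {f g : Lp ℝ p μ} (hfg : f ≤ g)
    (h : ∫ x, g x ∂μ ≤ ∫ x, f x ∂μ) : f = g :=
  Lp.ext <| (integral_eq_iff_of_ae_le (integrable f) (integrable g) ((coeFn_le f g).2 hfg)).1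
    (le_antisymm (monotone_integral hfg) h)

theorem eq_zero_of_nonneg_of_integral_eq_zero {f : Lp ℝ p μ} (hf : 0 ≤ f)
    (h : ∫ x, f x ∂μ = 0) : f = 0 :=
  (eq_of_le_of_integral_le hf <| by
    rw [h, integral_congr_ae (coeFn_zero ℝ p μ)]
    exact (integral_zero _ _).ge).symm

theorem exists_isLUB_tendsto_integral_of_monotone {g : ℕ → Lp ℝ p μ} (hg : Monotone g)
    (hbdd : BddAbove (range g)) :
    ∃ s : Lp ℝ p μ, IsLUB (range g) s ∧
      Tendsto (fun n => ∫ x, g n x ∂μ) atTop (𝓝 (∫ x, s x ∂μ)) := by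
  obtain ⟨s, hs⟩ := exists_ae_tendsto_of_monotone hg hbdd
  exact ⟨s, isLUB_range_of_ae_tendsto hg hs,
    integral_tendsto_of_tendsto_of_monotone (fun n => integrable (g n)) (integrable s)
      (ae_monotone_coeFn hg) hs⟩

theorem mem_upperBounds_of_isLUB_range {D : Set (Lp ℝ p μ)} (hD : DirectedOn (· ≤ ·) D)
    (hbdd : BddAbove D) {g : ℕ → Lp ℝ p μ} (hg : Monotone g) (hgD : ∀ n, g n ∈ D)
    {s : Lp ℝ p μ} (hs : IsLUB (range g) s) (hmax : ∀ f ∈ D, ∫ x, f x ∂μ ≤ ∫ x, s x ∂μ) :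
    s ∈ upperBounds D := by
  -- Each `f ⊔ g n` is dominated by an element of `D`, so their supremum `t ≥ s` has integral
  -- at most `∫ s`, hence `t = s`.
  intro f hf
  obtain ⟨b, hb⟩ := hbdd
  obtain ⟨t, ht, ht_tendsto⟩ := exists_isLUB_tendsto_integral_of_monotone
    (fun m n hmn => sup_le_sup_left (hg hmn) f : Monotone fun n => f ⊔ g n)
    ⟨b, forall_mem_range.2 fun n => sup_le (hb hf) (hb (hgD n))⟩
  have hst : s ≤ t :=
    hs.2 (forall_mem_range.2 fun n => le_sup_right.trans (ht.1 (mem_range_self n)))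
  have ht_int : ∫ x, t x ∂μ ≤ ∫ x, s x ∂μ := le_of_tendsto' ht_tendsto fun n => by
    obtain ⟨h, hhD, hfh, hgh⟩ := hD f hf (g n) (hgD n)
    exact (monotone_integral (sup_le hfh hgh)).trans (hmax h hhD)
  rw [eq_of_le_of_integral_le hst ht_int]
  exact le_sup_left.trans (ht.1 (mem_range_self 0))

theorem exists_isLUB_integral_of_directedOn {D : Set (Lp ℝ p μ)} (hne : D.Nonempty)
    (hD : DirectedOn (· ≤ ·) D) (hbdd : BddAbove D) :
    ∃ s : Lp ℝ p μ, IsLUB D s ∧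
      IsLUB ((fun f : Lp ℝ p μ => ∫ x, f x ∂μ) '' D) (∫ x, s x ∂μ) := by
  set I := (fun f : Lp ℝ p μ => ∫ x, f x ∂μ) '' D
  have hI : BddAbove I := monotone_integral.map_bddAbove hbdd
  obtain ⟨u, -, hu, huI⟩ := exists_seq_tendsto_sSup (hne.image _) hI
  choose F hFD hFu using huI
  obtain ⟨g, hg, hgD, hFg⟩ := hD.exists_monotone_seq_ge hFD
  obtain ⟨s, hs, hs_tendsto⟩ :=
    exists_isLUB_tendsto_integral_of_monotone hg (hbdd.mono (range_subset_iff.2 hgD))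
  have hs_int : ∫ x, s x ∂μ = sSup I :=
    tendsto_nhds_unique hs_tendsto <| tendsto_of_tendsto_of_tendsto_of_le_of_le hu
      tendsto_const_nhds (fun n => hFu n ▸ monotone_integral (hFg n))
      fun n => le_csSup hI (mem_image_of_mem _ (hgD n))
  have hs_ub : s ∈ upperBounds D :=
    mem_upperBounds_of_isLUB_range hD hbdd hg hgD hs
      fun f hf => hs_int ▸ le_csSup hI (mem_image_of_mem _ hf)
  exact ⟨s, ⟨hs_ub, fun v hv => hs.2 (forall_mem_range.2 fun n => hv (hgD n))⟩,
    hs_int ▸ isLUB_csSup (hne.image _) hI⟩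

end Lp

end MeasureTheory

/-- For a finite measure `μ`, every nonempty upward-directed bounded-above subset of the real
Banach lattice `L^∞(μ)` has a least upper bound, and the integral of the least upper bound is
the supremum of the integrals; moreover the integral is faithful on `L^∞(μ)`. -/
theorem Linfty_directed_lub_and_faithful_integral
    {X : Type*} [MeasurableSpace X] (μ : Measure X) [IsFiniteMeasure μ] :
    (∀ D : Set (Lp ℝ ⊤ μ), D.Nonempty → DirectedOn (· ≤ ·) D → BddAbove D →
      ∃ s : Lp ℝ ⊤ μ, IsLUB D s ∧
        IsLUB ((fun f : Lp ℝ ⊤ μ => ∫ x, f x ∂μ) '' D) (∫ x, s x ∂μ)) ∧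
    (∀ f : Lp ℝ ⊤ μ, 0 ≤ f → (∫ x, f x ∂μ) = 0 → f = 0) :=
  ⟨fun _ => Lp.exists_isLUB_integral_of_directedOn,
    fun _ => Lp.eq_zero_of_nonneg_of_integral_eq_zero⟩
end

section
/- Let X be a compact Hausdorff space such that every nonempty upward-directed, bounded-above subset of the space C(X, ℝ) of real-valued continuous functions on X has a least upper bound in C(X, ℝ) (for the pointwise order). Then X is extremally disconnected. -/
/-- If every nonempty upward-directed bounded-above subset of `C(X, ℝ)` (with the pointwise
order) has a least upper bound, where `X` is a compact Hausdorff space, then `X` is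
extremally disconnected. -/
theorem extremallyDisconnected_of_directed_lub
    {X : Type*} [TopologicalSpace X] [CompactSpace X] [T2Space X]
    (h : ∀ D : Set C(X, ℝ), D.Nonempty → DirectedOn (· ≤ ·) D → BddAbove D →
      ∃ s : C(X, ℝ), IsLUB D s) :
    ExtremallyDisconnected X := by
  constructor
  intro U hU
  set D : Set C(X, ℝ) :=
    {f | (∀ x, f x ∈ Set.Icc (0:ℝ) 1) ∧ ∀ x ∉ U, f x = 0} with hDdef
  have h0 : (0 : C(X, ℝ)) ∈ D :=
    ⟨fun x => ⟨le_refl 0, zero_le_one⟩, fun x _ => rfl⟩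
  have hdir : DirectedOn (· ≤ ·) D := by
    rintro f ⟨hf1, hf2⟩ g ⟨hg1, hg2⟩
    refine ⟨f ⊔ g, ⟨fun x => ⟨le_sup_of_le_left (hf1 x).1,
      sup_le (hf1 x).2 (hg1 x).2⟩, fun x hx => ?_⟩, le_sup_left, le_sup_right⟩
    show f x ⊔ g x = 0
    rw [hf2 x hx, hg2 x hx, sup_idem]
  have h1ub : (1 : C(X, ℝ)) ∈ upperBounds D := fun f hf x => (hf.1 x).2
  obtain ⟨s, hs⟩ := h D ⟨0, h0⟩ hdir ⟨1, h1ub⟩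
  have hs0 : ∀ x, 0 ≤ s x := fun x => hs.1 h0 x
  -- s = 1 on U
  have hU1 : ∀ x ∈ U, s x = 1 := by
    intro x hx
    obtain ⟨f, hf0, hf1, hfI⟩ := exists_continuous_zero_one_of_isClosed
      (isClosed_compl_iff.2 hU) (isClosed_singleton (x := x))
      (by simp [Set.disjoint_singleton_right, hx])
    have hfD : f ∈ D := ⟨hfI, fun y hy => hf0 hy⟩
    have h1 : (1:ℝ) ≤ s x := by
      have h' : f x ≤ s x := hs.1 hfD x
      rwa [hf1 rfl] at h'
    have h2 : s x ≤ 1 := hs.2 h1ub x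
    linarith
  -- s = 1 on closure U
  have hC1 : ∀ x ∈ closure U, s x = 1 := by
    have : closure U ⊆ s ⁻¹' {1} := closure_minimal
      (fun x hx => hU1 x hx) (isClosed_singleton.preimage s.continuous)
    intro x hx; exact this hx
  -- s = 0 off closure U
  have hC0 : ∀ x ∉ closure U, s x = 0 := by
    intro x hx
    obtain ⟨g, hg0, hg1, hgI⟩ := exists_continuous_zero_one_of_isClosed
      (isClosed_singleton (x := x)) (isClosed_closure (s := U))
      (by simp [Set.disjoint_singleton_left, hx])
    have hgub : g ∈ upperBounds D := by
      intro f hf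
      intro y
      show f y ≤ g y
      by_cases hy : y ∈ U
      · have hgy : g y = 1 := hg1 (subset_closure hy)
        rw [hgy]; exact (hf.1 y).2
      · rw [hf.2 y hy]; exact (hgI y).1
    have h1 : s x ≤ 0 := by
      have h' : s x ≤ g x := hs.2 hgub x
      rwa [hg0 rfl] at h'
    exact le_antisymm h1 (hs0 x)
  have key : closure U = s ⁻¹' Set.Ioi (1/2 : ℝ) := by
    ext x
    constructor
    · intro hx
      simp only [Set.mem_preimage, Set.mem_Ioi, hC1 x hx]
      norm_num
    · intro hx
      by_contra hxc
      have := hC0 x hxc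
      simp only [Set.mem_preimage, Set.mem_Ioi, this] at hx
      norm_num at hx
  rw [key]
  exact isOpen_Ioi.preimage s.continuous
end

section
/- Let X be an extremally disconnected compact Hausdorff space. Then the ℂ-linear span of the idempotent elements of C(X, ℂ) (equivalently, of the indicator functions of clopen subsets of X) is dense in C(X, ℂ) with respect to the supremum norm. -/
/-- In `C(X, ℂ)` for an extremally disconnected compact Hausdorff space `X`, the ℂ-linear
span of the idempotent elements is dense with respect to the supremum norm. -/
theorem span_idempotents_dense
    {X : Type*} [TopologicalSpace X] [CompactSpace X] [T2Space X]
    [ExtremallyDisconnected X] :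
    Dense ((Submodule.span ℂ {f : C(X, ℂ) | f * f = f} : Submodule ℂ C(X, ℂ)) :
      Set C(X, ℂ)) := by
  set S : Submodule ℂ C(X, ℂ) := Submodule.span ℂ {f : C(X, ℂ) | f * f = f} with hS
  have hone : (1 : C(X, ℂ)) ∈ S :=
    Submodule.subset_span (by simp [Set.mem_setOf_eq])
  have hmul : ∀ a ∈ S, ∀ b ∈ S, a * b ∈ S := by
    intro a ha b hb
    have h1 : S * S ≤ S := by
      rw [hS, Submodule.span_mul_span]
      apply Submodule.span_le.mpr
      rintro _ ⟨f, hf, g, hg, rfl⟩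
      apply Submodule.subset_span
      simp only [Set.mem_setOf_eq] at *
      calc f * g * (f * g) = (f * f) * (g * g) := by ring
        _ = f * g := by rw [hf, hg]
    exact h1 (Submodule.mul_mem_mul ha hb)
  have hstar : ∀ a ∈ S, star a ∈ S := by
    intro a ha
    induction ha using Submodule.span_induction with
    | mem f hf =>
      apply Submodule.subset_span
      simp only [Set.mem_setOf_eq] at *
      rw [← star_mul, mul_comm, hf]
    | zero => simp only [star_zero]; exact S.zero_mem
    | add f g _ _ hf hg => rw [star_add]; exact S.add_mem hf hg
    | smul c f _ hf => rw [star_smul]; exact S.smul_mem _ hf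
  let A : StarSubalgebra ℂ C(X, ℂ) :=
    { carrier := (S : Set C(X, ℂ))
      mul_mem' := fun ha hb => hmul _ ha _ hb
      add_mem' := fun ha hb => S.add_mem ha hb
      algebraMap_mem' := fun c => show (algebraMap ℂ C(X, ℂ)) c ∈ S by
        rw [Algebra.algebraMap_eq_smul_one]
        exact S.smul_mem c hone
      star_mem' := fun ha => hstar _ ha }
  have hsep : A.SeparatesPoints := by
    intro x y hxy
    obtain ⟨U, hU, hxU, hyU⟩ := exists_isClopen_of_totally_separated hxy
    refine ⟨_, ⟨(LocallyConstant.charFn ℂ hU : C(X, ℂ)), ?_, rfl⟩, ?_⟩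
    · apply Submodule.subset_span
      simp only [Set.mem_setOf_eq]
      ext z
      simp only [ContinuousMap.mul_apply, LocallyConstant.coe_continuousMap,
        LocallyConstant.coe_charFn]
      by_cases hz : z ∈ U <;> simp [Set.indicator, hz]
    · simp only [LocallyConstant.coe_continuousMap, LocallyConstant.coe_charFn]
      simp [Set.indicator, hxU, Set.notMem_of_mem_compl hyU]
  have htop := ContinuousMap.starSubalgebra_topologicalClosure_eq_top_of_separatesPoints A hsep
  rw [dense_iff_closure_eq]
  have : (A.topologicalClosure : Set C(X, ℂ)) = closure (S : Set C(X, ℂ)) := rfl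
  rw [← this, htop]
  rfl
end

section
/- Let a be an element of a unital C*-algebra with ‖a‖ ≤ 1, and let p and q be projections. Then the following are equivalent: a* p a ≤ 1 − q; p a q = 0; a q a* ≤ 1 − p. -/
lemma proj_key {A : Type*} [CStarAlgebra A] [PartialOrder A] [StarOrderedRing A]
    (a p q : A) (ha : ‖a‖ ≤ 1)
    (hp : star p = p ∧ p * p = p) (hq : star q = q ∧ q * q = q) :
    star a * p * a ≤ 1 - q ↔ p * a * q = 0 := by
  obtain ⟨hps, hpi⟩ := hp
  obtain ⟨hqs, hqi⟩ := hq
  have hp1 : p ≤ 1 := by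
    rw [← sub_nonneg]
    have h1 : (1 - p) = star (1 - p) * (1 - p) := by
      simp [star_sub, hps, mul_sub, sub_mul, hpi]
    rw [h1]
    exact star_mul_self_nonneg _
  have hle1 : star a * p * a ≤ 1 := by
    calc star a * p * a ≤ star a * 1 * a := star_left_conjugate_le_conjugate hp1 a
    _ = star a * a := by rw [mul_one]
    _ ≤ algebraMap ℝ A (‖a‖ ^ 2) := CStarAlgebra.star_mul_le_algebraMap_norm_sq
    _ ≤ 1 := by
        rw [Algebra.algebraMap_eq_smul_one]
        nth_rewrite 2 [← one_smul ℝ (1:A)]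
        refine smul_le_smul_of_nonneg_right ?_ zero_le_one
        nlinarith [norm_nonneg a]
  have hconj : star (p * a * q) * (p * a * q) = star q * (star a * p * a) * q := by
    simp only [star_mul, hps, hqs, ← mul_assoc]
    rw [mul_assoc (q * star a) p p, hpi]
  constructor
  · intro h
    have h2 : star q * (star a * p * a) * q ≤ star q * (1 - q) * q :=
      star_left_conjugate_le_conjugate h q
    have h3 : star q * (1 - q) * q = 0 := by
      rw [hqs]; simp [mul_sub, sub_mul, hqi]
    rw [h3, ← hconj] at h2
    rw [← CStarRing.star_mul_self_eq_zero_iff (p * a * q)]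
    exact le_antisymm h2 (star_mul_self_nonneg _)
  · intro h
    have hstar : q * star a * p = 0 := by
      have := congrArg star h
      simpa [star_mul, hps, hqs, mul_assoc] using this
    have key : star a * p * a = (1 - q) * (star a * p * a) * (1 - q) := by
      have hXq : star a * p * a * q = 0 := by
        rw [mul_assoc, mul_assoc, ← mul_assoc p a q, h, mul_zero]
      have hqX : q * (star a * p * a) = 0 := by
        rw [← mul_assoc, ← mul_assoc, hstar, zero_mul]
      rw [sub_mul, one_mul, hqX, sub_zero, mul_sub, mul_one, hXq, sub_zero]
    have hsaq : IsSelfAdjoint (1 - q) := by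
      rw [IsSelfAdjoint, star_sub, star_one, hqs]
    calc star a * p * a = (1 - q) * (star a * p * a) * (1 - q) := key
      _ ≤ (1 - q) * 1 * (1 - q) := hsaq.conjugate_le_conjugate hle1
      _ = 1 - q := by rw [mul_one]; simp [mul_sub, sub_mul, hqi]

/-- For an element `a` of norm at most one and projections `p`, `q` of a unital C*-algebra,
the following are equivalent: `a* p a ≤ 1 - q`; `p a q = 0`; `a q a* ≤ 1 - p`. -/
theorem projection_contraposition
    {A : Type*} [CStarAlgebra A] [PartialOrder A] [StarOrderedRing A]
    (a p q : A) (ha : ‖a‖ ≤ 1)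
    (hp : star p = p ∧ p * p = p) (hq : star q = q ∧ q * q = q) :
    (star a * p * a ≤ 1 - q ↔ p * a * q = 0) ∧
    (p * a * q = 0 ↔ a * q * star a ≤ 1 - p) := by
  have h1 := proj_key a p q ha hp hq
  have h2 := proj_key (star a) q p (by rwa [norm_star]) hq hp
  rw [star_star] at h2
  refine ⟨h1, ?_⟩
  rw [h2]
  constructor
  · intro h
    have := congrArg star h
    simpa [star_mul, hp.1, hq.1, mul_assoc] using this
  · intro h
    have := congrArg star h
    simpa [star_mul, hp.1, hq.1, mul_assoc] using this
end

section
/- An effect a of a unital C*-algebra (i.e., 0 ≤ a ≤ 1) is a projection (a² = a) if and only if the only effect below both a and 1 − a is 0; that is, a² = a if and only if every b with 0 ≤ b ≤ 1, b ≤ a and b ≤ 1 − a satisfies b = 0. -/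
/-! A projection `e` absorbs every positive `b ≤ e` (`b * e = b`); if also `b ≤ 1 - e`, then
`b * (1 - e) = b` too, so `b * e = 0` and hence `b = 0`. Conversely, for an effect `a` the element
`a - a²` is again an effect, and it lies below `a` and below `1 - a = a - a² + (1 - a)²`;
so if `0` is the only such effect, `a² = a`. -/

section CStarAlgebra

variable {A : Type*} [CStarAlgebra A] [PartialOrder A] [StarOrderedRing A]

lemma IsStarProjection.eq_zero_of_le_of_le_one_sub {e b : A} (he : IsStarProjection e)
    (hb : 0 ≤ b) (hbe : b ≤ e) (hbe' : b ≤ 1 - e) : b = 0 := by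
  have hmul : b * e = b := (he.mul_right_and_mul_left_of_nonneg_of_le hb hbe).1
  have hmul' : b * (1 - e) = b := (he.one_sub.mul_right_and_mul_left_of_nonneg_of_le hb hbe').1
  rwa [mul_sub, mul_one, hmul, sub_self, eq_comm] at hmul'

lemma sub_mul_self_nonneg_of_nonneg_of_le_one {a : A} (ha0 : 0 ≤ a) (ha1 : a ≤ 1) :
    0 ≤ a - a * a := by
  simpa [sq] using CStarAlgebra.pow_antitone ha0 ha1 (by decide : 1 ≤ 2)

end CStarAlgebra

lemma IsSelfAdjoint.sub_mul_self_le_one_sub {R : Type*} [Ring R] [PartialOrder R] [StarRing R]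
    [StarOrderedRing R] {a : R} (ha : IsSelfAdjoint a) : a - a * a ≤ 1 - a := by
  have hsq : 0 ≤ (1 - a) * (1 - a) := ((IsSelfAdjoint.one R).sub ha).mul_self_nonneg
  rw [show (1 - a) * (1 - a) = 1 - a - (a - a * a) by noncomm_ring] at hsq
  exact sub_nonneg.mp hsq

/-- An effect `a` of a unital C*-algebra (i.e. `0 ≤ a ≤ 1`) is a projection if and only if
the only effect below both `a` and `1 - a` is `0`. -/
theorem effect_is_projection_iff
    {A : Type*} [CStarAlgebra A] [PartialOrder A] [StarOrderedRing A]
    (a : A) (ha0 : 0 ≤ a) (ha1 : a ≤ 1) :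
    a * a = a ↔ ∀ b : A, 0 ≤ b → b ≤ 1 → b ≤ a → b ≤ 1 - a → b = 0 := by
  have hsa : IsSelfAdjoint a := .of_nonneg ha0
  constructor
  · intro hproj b hb0 _ hba hba'
    exact IsStarProjection.eq_zero_of_le_of_le_one_sub ⟨hproj, hsa⟩ hb0 hba hba'
  · intro h
    have hle_a : a - a * a ≤ a := sub_le_self a hsa.mul_self_nonneg
    have hzero := h (a - a * a) (sub_mul_self_nonneg_of_nonneg_of_le_one ha0 ha1)
      (hle_a.trans ha1) hle_a hsa.sub_mul_self_le_one_sub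
    exact (sub_eq_zero.mp hzero).symm
end

section
/- Let a and b be effects and e a projection in a unital C*-algebra. Then e ≤ √a · b · √a if and only if e ≤ a and e ≤ b. -/
/-!
For a projection `e` and an effect `c`, `e ≤ c` iff `c * e = e` iff `e * c * e = e`.
Since `√a * b * √a ≤ a ≤ √a`, either side of the equivalence gives `e ≤ √a`,
i.e. `√a * e = e = e * √a`. Then `e ≤ √a * b * √a` yields
`e * b * e = e * (√a * b * √a) * e = e`, i.e. `e ≤ b`; conversely `e ≤ b` yields
`e = √a * e * √a ≤ √a * b * √a`.
-/

lemma mul_eq_zero_of_star_mul_mul_eq_zero {A : Type*} [NonUnitalCStarAlgebra A] [PartialOrder A]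
    [StarOrderedRing A] {a b : A} (ha : 0 ≤ a) (h : star b * a * b = 0) : a * b = 0 := by
  have hsqrt : CFC.sqrt a * b = 0 := by
    rw [← norm_eq_zero, ← sq_eq_zero_iff, ← CFC.norm_star_mul_mul_self_of_nonneg b ha, h,
      norm_zero]
  rw [← CFC.sqrt_mul_sqrt_self a ha, mul_assoc, hsqrt, mul_zero]

section Effect

variable {A : Type*} [CStarAlgebra A] [PartialOrder A] [StarOrderedRing A] {a b e : A}

lemma CFC.sqrt_le_one (ha1 : a ≤ 1) : CFC.sqrt a ≤ 1 :=
  CFC.sqrt_one (A := A) ▸ CFC.sqrt_le_sqrt a 1 ha1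

lemma CFC.le_sqrt_of_le_one (ha0 : 0 ≤ a) (ha1 : a ≤ 1) : a ≤ CFC.sqrt a := by
  simpa [pow_two, CFC.sqrt_mul_sqrt_self a ha0] using
    CStarAlgebra.pow_antitone (CFC.sqrt_nonneg a) (CFC.sqrt_le_one ha1) one_le_two

namespace IsStarProjection

-- `e ≤ b ≤ 1` means `0 ≤ 1 - b ≤ 1 - e`, and `1 - e` is again a projection.
lemma mul_eq_self_of_le (he : IsStarProjection e) (hb1 : b ≤ 1) (heb : e ≤ b) :
    b * e = e ∧ e * b = e := by
  obtain ⟨hr, hl⟩ := he.one_sub.mul_right_and_mul_left_of_nonneg_of_le (sub_nonneg.2 hb1)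
    (sub_le_sub_left heb 1)
  constructor
  · linear_combination (norm := noncomm_ring) hr
  · linear_combination (norm := noncomm_ring) hl

lemma le_of_mul_eq_self (he : IsStarProjection e) (hb0 : 0 ≤ b) (hbe : b * e = e) : e ≤ b := by
  have heb : e * b = e := by
    simpa [hb0.star_eq, he.isSelfAdjoint.star_eq] using congr(star $hbe)
  have hconj : star (1 - e) * b * (1 - e) = b - e := by
    rw [he.one_sub.isSelfAdjoint.star_eq]
    linear_combination (norm := noncomm_ring) e * hbe - hbe - heb + he.isIdempotentElem.eq
  exact sub_nonneg.1 (hconj ▸ star_left_conjugate_nonneg hb0 (1 - e))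

lemma le_of_conjugate_eq (he : IsStarProjection e) (hb0 : 0 ≤ b) (hb1 : b ≤ 1)
    (hebe : e * b * e = e) : e ≤ b := by
  have h : star e * (1 - b) * e = 0 := by
    rw [he.isSelfAdjoint.star_eq, mul_sub, sub_mul, mul_one, he.isIdempotentElem.eq, hebe, sub_self]
  have := mul_eq_zero_of_star_mul_mul_eq_zero (sub_nonneg.2 hb1) h
  exact he.le_of_mul_eq_self hb0 (by rwa [sub_mul, one_mul, sub_eq_zero, eq_comm] at this)

end IsStarProjection

end Effect

/-- For effects `a`, `b` and a projection `e` of a unital C*-algebra: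
`e ≤ √a * b * √a` if and only if `e ≤ a` and `e ≤ b`. -/
theorem projection_le_sqrt_mul_sqrt_iff
    {A : Type*} [CStarAlgebra A] [PartialOrder A] [StarOrderedRing A]
    (a b e : A) (ha0 : 0 ≤ a) (ha1 : a ≤ 1) (hb0 : 0 ≤ b) (hb1 : b ≤ 1)
    (he : star e = e ∧ e * e = e) :
    e ≤ CFC.sqrt a * b * CFC.sqrt a ↔ e ≤ a ∧ e ≤ b := by
  have he : IsStarProjection e := isStarProjection_iff'.2 he.symm
  set s := CFC.sqrt a
  have hs : IsSelfAdjoint s := (CFC.sqrt_nonneg a).isSelfAdjoint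
  have hsbs : s * b * s ≤ a := by
    simpa [s, CFC.sqrt_mul_sqrt_self a ha0] using hs.conjugate_le_conjugate hb1
  have absorb_sqrt (hea : e ≤ a) : s * e = e ∧ e * s = e :=
    he.mul_eq_self_of_le (CFC.sqrt_le_one ha1) (hea.trans (CFC.le_sqrt_of_le_one ha0 ha1))
  constructor
  · intro h
    have hea : e ≤ a := h.trans hsbs
    obtain ⟨hse, hes⟩ := absorb_sqrt hea
    have hesbse : e * (s * b * s) = e := (he.mul_eq_self_of_le (hsbs.trans ha1) h).2
    refine ⟨hea, he.le_of_conjugate_eq hb0 hb1 ?_⟩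
    calc e * b * e = e * s * b * (s * e) := by rw [hes, hse]
      _ = e * (s * b * s) * e := by noncomm_ring
      _ = e := by rw [hesbse, he.isIdempotentElem.eq]
  · rintro ⟨hea, heb⟩
    obtain ⟨hse, hes⟩ := absorb_sqrt hea
    calc e = s * e * s := by rw [hse, hes]
      _ ≤ s * b * s := hs.conjugate_le_conjugate heb
end

section
/- Least projection above an effect (ceiling): let M be a von Neumann algebra on a complex Hilbert space H and let b ∈ M be an effect. Then there is a least projection p ∈ M with b ≤ p, namely the least upper bound, in the Loewner order on self-adjoint bounded operators on H, of the ascending sequence b^{1/2ⁿ} (n = 0, 1, 2, …, powers via continuous functional calculus). Moreover, every bounded operator a on H that commutes with b commutes with p. -/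
/-!
The iterated square roots `bₙ = b^{1/2ⁿ}` form an increasing sequence of effects. For `m ≥ n`
the difference `bₘ - bₙ` is again an effect, so `‖(bₘ - bₙ) x‖² ≤ ⟪(bₘ - bₙ) x, x⟫`, and the
increasing bounded scalar sequences `⟪bₙ x, x⟫` make `bₙ x` Cauchy: the `bₙ` converge strongly
to an operator `p`. The Loewner order is closed under strong limits, so `p` is the supremum of
the `bₙ`, and passing to the limit in `bₙ₊₁ * bₙ₊₁ = bₙ` shows that `p` is idempotent. A
projection `q ≥ b` satisfies `√q = q`, so operator monotonicity of `√` gives `bₙ ≤ q` for all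
`n`. Finally everything commuting with `b` commutes with each `bₙ`, hence with `p`, which
therefore lies in the bicommutant `M'' = M`.
-/

open Filter Topology
open scoped InnerProductSpace ComplexOrder

lemma IsStarProjection.sqrt_eq {A : Type*} [CStarAlgebra A] [PartialOrder A] [StarOrderedRing A]
    {q : A} (hq : IsStarProjection q) : CFC.sqrt q = q :=
  CFC.sqrt_unique hq.isIdempotentElem.eq hq.nonneg

namespace CFC

variable {A : Type*} [CStarAlgebra A] [PartialOrder A] [StarOrderedRing A]

lemma le_sqrt_of_le_one_s15 {a : A} (ha₀ : 0 ≤ a) (ha₁ : a ≤ 1) : a ≤ sqrt a := by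
  have hsqrt₁ : sqrt a ≤ 1 := (sqrt_le_sqrt a 1 ha₁).trans_eq (sqrt_one (A := A))
  simpa [sq_sqrt a] using CStarAlgebra.pow_antitone (sqrt_nonneg a) hsqrt₁ one_le_two

lemma iterate_sqrt_le_one {a : A} (ha : a ≤ 1) (n : ℕ) : sqrt^[n] a ≤ 1 :=
  (monotone_sqrt.iterate n ha).trans_eq (Function.iterate_fixed (sqrt_one (A := A)) n)

lemma iterate_sqrt_le_of_isStarProjection {a q : A} (hq : IsStarProjection q) (haq : a ≤ q)
    (n : ℕ) : sqrt^[n] a ≤ q :=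
  (monotone_sqrt.iterate n haq).trans_eq (Function.iterate_fixed hq.sqrt_eq n)

lemma monotone_iterate_sqrt {a : A} (ha₀ : 0 ≤ a) (ha₁ : a ≤ 1) :
    Monotone fun n => sqrt^[n] a :=
  monotone_sqrt.monotone_iterate_of_le_map (le_sqrt_of_le_one_s15 ha₀ ha₁)

lemma iterate_sqrt_nonneg {a : A} (ha : 0 ≤ a) : ∀ n, 0 ≤ sqrt^[n] a
  | 0 => ha
  | n + 1 => Function.iterate_succ_apply' sqrt n a ▸ sqrt_nonneg _

lemma iterate_succ_sqrt_mul_self {a : A} (ha : 0 ≤ a) (n : ℕ) :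
    sqrt^[n + 1] a * sqrt^[n + 1] a = sqrt^[n] a := by
  rw [Function.iterate_succ_apply']
  exact sqrt_mul_sqrt_self _ (iterate_sqrt_nonneg ha n)

end CFC

lemma Commute.iterate_sqrt {A : Type*} [CStarAlgebra A] [PartialOrder A] [StarOrderedRing A]
    {a b : A} (h : Commute a b) (n : ℕ) : Commute a (CFC.sqrt^[n] b) := by
  induction n with
  | zero => exact h
  | succ n ih =>
    rw [Function.iterate_succ_apply', CFC.sqrt_eq_cfc]
    exact (ih.symm.cfc_nnreal _).symm

namespace ContinuousLinearMap

section StrongLimits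

variable {ι 𝕜 E : Type*} {l : Filter ι}

lemma tendsto_mul_apply [NontriviallyNormedField 𝕜] [SeminormedAddCommGroup E] [NormedSpace 𝕜 E]
    {f g : ι → E →L[𝕜] E} {p q : E →L[𝕜] E} {C : ℝ} (hC : ∀ i, ‖f i‖ ≤ C)
    (hf : ∀ x, Tendsto (fun i => f i x) l (𝓝 (p x)))
    (hg : ∀ x, Tendsto (fun i => g i x) l (𝓝 (q x))) (x : E) :
    Tendsto (fun i => (f i * g i) x) l (𝓝 ((p * q) x)) := by
  have h : Tendsto (fun i => f i (g i x - q x)) l (𝓝 0) :=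
    squeeze_zero_norm (fun i => (f i).le_of_opNorm_le (hC i) _)
      (by simpa using ((hg x).sub_const (q x)).norm.const_mul C)
  simpa using h.add (hf (q x))

variable [l.NeBot]

lemma commute_of_tendsto_apply [NontriviallyNormedField 𝕜] [SeminormedAddCommGroup E]
    [NormedSpace 𝕜 E] [T2Space E] {f : ι → E →L[𝕜] E} {a p : E →L[𝕜] E}
    (hf : ∀ x, Tendsto (fun i => f i x) l (𝓝 (p x))) (h : ∀ i, Commute a (f i)) :
    Commute a p := by
  ext x
  exact tendsto_nhds_unique
    (((a.continuous.tendsto _).comp (hf x)).congr fun i => DFunLike.congr_fun (h i).eq x)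
    (hf (a x))

variable [RCLike 𝕜] [NormedAddCommGroup E] [InnerProductSpace 𝕜 E] {g : ι → E →L[𝕜] E}
  {S T : E →L[𝕜] E}

lemma isPositive_of_tendsto_apply (hg : ∀ x, Tendsto (fun i => g i x) l (𝓝 (T x)))
    (h : ∀ᶠ i in l, (g i).IsPositive) : T.IsPositive := by
  refine (isPositive_iff T).2 ⟨fun x y => ?_, fun x => ?_⟩
  · exact tendsto_nhds_unique_of_eventuallyEq ((hg x).inner tendsto_const_nhds)
      (tendsto_const_nhds.inner (hg y)) (h.mono fun i hi => hi.isSymmetric x y)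
  · exact ge_of_tendsto ((hg x).inner tendsto_const_nhds)
      (h.mono fun i hi => hi.inner_nonneg_left x)

lemma le_of_tendsto_apply (hg : ∀ x, Tendsto (fun i => g i x) l (𝓝 (T x)))
    (h : ∀ᶠ i in l, g i ≤ S) : T ≤ S :=
  isPositive_of_tendsto_apply (fun x => tendsto_const_nhds.sub (hg x)) h

lemma ge_of_tendsto_apply (hg : ∀ x, Tendsto (fun i => g i x) l (𝓝 (T x)))
    (h : ∀ᶠ i in l, S ≤ g i) : S ≤ T :=
  isPositive_of_tendsto_apply (fun x => (hg x).sub tendsto_const_nhds) h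

end StrongLimits

section MonotoneConvergence

variable {H : Type*} [NormedAddCommGroup H] [InnerProductSpace ℂ H] [CompleteSpace H]

lemma norm_apply_sq_le_re_inner {T : H →L[ℂ] H} (h₀ : 0 ≤ T) (h₁ : T ≤ 1) (x : H) :
    ‖T x‖ ^ 2 ≤ RCLike.re ⟪T x, x⟫_ℂ := by
  have hTT : T * T ≤ T := by simpa [sq] using CStarAlgebra.pow_antitone h₀ h₁ one_le_two
  have h := ((le_def _ _).1 hTT).re_inner_nonneg_left x
  have hTT_inner : ⟪(T * T) x, x⟫_ℂ = ⟪T x, T x⟫_ℂ :=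
    ((nonneg_iff_isPositive T).1 h₀).isSymmetric (T x) x
  rw [sub_apply, inner_sub_left, map_sub, hTT_inner, inner_self_eq_norm_sq] at h
  linarith

lemma cauchySeq_apply_of_monotone {f : ℕ → H →L[ℂ] H} (hf : Monotone f) (h₀ : 0 ≤ f 0)
    (h₁ : ∀ n, f n ≤ 1) (x : H) : CauchySeq fun n => f n x := by
  set s : ℕ → ℝ := fun n => RCLike.re ⟪f n x, x⟫_ℂ
  have hs_mono : Monotone s := fun m n hmn => by
    simpa [s, inner_sub_left] using ((le_def _ _).1 (hf hmn)).re_inner_nonneg_left x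
  have hs_bdd : ∀ n, s n ≤ RCLike.re ⟪x, x⟫_ℂ := fun n => by
    simpa [s, inner_sub_left] using ((le_def _ _).1 (h₁ n)).re_inner_nonneg_left x
  have hs : CauchySeq s :=
    (tendsto_atTop_ciSup hs_mono ⟨_, Set.forall_mem_range.2 hs_bdd⟩).cauchySeq
  have hdist : ∀ m n, dist (f m x) (f n x) ^ 2 ≤ dist (s m) (s n) := by
    intro m n
    wlog hnm : n ≤ m generalizing m n
    · rw [dist_comm, dist_comm (s m)]
      exact this n m (le_of_not_ge hnm)
    have h := norm_apply_sq_le_re_inner (sub_nonneg.2 (hf hnm))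
      ((sub_le_self _ (h₀.trans (hf n.zero_le))).trans (h₁ m)) x
    rw [dist_eq_norm, Real.dist_eq, ← sub_apply]
    simpa [s, inner_sub_left] using h.trans (le_abs_self _)
  refine Metric.cauchySeq_iff.2 fun ε hε => ?_
  obtain ⟨N, hN⟩ := Metric.cauchySeq_iff.1 hs (ε ^ 2) (by positivity)
  exact ⟨N, fun m hm n hn =>
    lt_of_pow_lt_pow_left₀ 2 hε.le ((hdist m n).trans_lt (hN m hm n hn))⟩

lemma exists_tendsto_apply_of_monotone {f : ℕ → H →L[ℂ] H} (hf : Monotone f) (h₀ : 0 ≤ f 0)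
    (h₁ : ∀ n, f n ≤ 1) : ∃ p : H →L[ℂ] H, ∀ x, Tendsto (fun n => f n x) atTop (𝓝 (p x)) := by
  choose p hp using fun x =>
    cauchySeq_tendsto_of_complete (cauchySeq_apply_of_monotone hf h₀ h₁ x)
  exact ⟨continuousLinearMapOfTendsto f (tendsto_pi_nhds.2 hp), hp⟩

end MonotoneConvergence

end ContinuousLinearMap

lemma VonNeumannAlgebra.mem_of_forall_commute {H : Type*} [NormedAddCommGroup H]
    [InnerProductSpace ℂ H] [CompleteSpace H] (M : VonNeumannAlgebra H) {b p : H →L[ℂ] H}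
    (hb : b ∈ M) (h : ∀ a, Commute a b → Commute a p) : p ∈ M := by
  rw [← SetLike.mem_coe, ← M.centralizer_centralizer]
  exact fun a ha => (h a (ha b hb).symm).eq

open ContinuousLinearMap CFC

/-- **Ceiling of an effect**: for an effect `b` in a von Neumann algebra `M` on a complex
Hilbert space `H` there is a least projection `p ∈ M` above `b`, namely the least upper bound
(in the Loewner order, among self-adjoint operators) of the ascending sequence
`b^{1/2ⁿ}` of iterated square roots of `b`; moreover every bounded operator commuting with
`b` commutes with `p`. -/
theorem vonNeumannAlgebra_ceiling
    {H : Type*} [NormedAddCommGroup H] [InnerProductSpace ℂ H] [CompleteSpace H]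
    (M : VonNeumannAlgebra H) (b : H →L[ℂ] H) (hbM : b ∈ M)
    (hb0 : 0 ≤ b) (hb1 : b ≤ 1) :
    ∃ p : H →L[ℂ] H, p ∈ M ∧ star p = p ∧ p * p = p ∧ b ≤ p ∧
      (∀ q : H →L[ℂ] H, q ∈ M → star q = q → q * q = q → b ≤ q → p ≤ q) ∧
      (∀ n : ℕ, (CFC.sqrt (A := H →L[ℂ] H))^[n] b ≤ p) ∧
      (∀ t : H →L[ℂ] H, IsSelfAdjoint t →
        (∀ n : ℕ, (CFC.sqrt (A := H →L[ℂ] H))^[n] b ≤ t) → p ≤ t) ∧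
      (∀ a : H →L[ℂ] H, a * b = b * a → a * p = p * a) := by
  have hmono := monotone_iterate_sqrt hb0 hb1
  obtain ⟨p, hp⟩ := exists_tendsto_apply_of_monotone hmono hb0 (iterate_sqrt_le_one hb1)
  have hle : ∀ n, sqrt^[n] b ≤ p := fun n =>
    ge_of_tendsto_apply hp ((eventually_ge_atTop n).mono fun _ => (hmono ·))
  have hlub : ∀ t, (∀ n, sqrt^[n] b ≤ t) → p ≤ t := fun t ht =>
    le_of_tendsto_apply hp (.of_forall ht)
  have hcomm : ∀ a, Commute a b → Commute a p := fun a ha =>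
    commute_of_tendsto_apply hp ha.iterate_sqrt
  have hidem : p * p = p := by
    ext x
    have hnorm : ∀ n, ‖sqrt^[n + 1] b‖ ≤ 1 := fun n =>
      (CStarAlgebra.norm_le_one_iff_of_nonneg _ (iterate_sqrt_nonneg hb0 _)).2
        (iterate_sqrt_le_one hb1 _)
    have hsucc := fun x => (hp x).comp (tendsto_add_atTop_nat 1)
    refine tendsto_nhds_unique ?_ (hp x)
    simpa only [iterate_succ_sqrt_mul_self hb0] using tendsto_mul_apply hnorm hsucc hsucc x
  have hsa : IsSelfAdjoint p := .of_nonneg (hb0.trans (hle 0))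
  exact ⟨p, M.mem_of_forall_commute hbM hcomm, hsa.star_eq, hidem, hle 0,
    fun q _ hq hqq hbq => hlub q (iterate_sqrt_le_of_isStarProjection ⟨hqq, hq⟩ hbq),
    hle, fun t _ => hlub t, hcomm⟩
end

section
/- Let f : A → B be a positive linear map between unital C*-algebras, and let p ∈ A be an effect with f(1 − p) = 0. Then f(a) = f(p a) = f(a p) = f(p a p) for all a ∈ A. -/
/-- Key lemma: if `f` is a positive linear map and `f (star x * x) = 0`, then
`f (star x * y) = 0` and `f (star y * x) = 0` for every `y`. -/
theorem positive_map_schwarz_zero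
    {A B : Type*} [CStarAlgebra A] [PartialOrder A] [StarOrderedRing A]
    [CStarAlgebra B] [PartialOrder B] [StarOrderedRing B]
    (f : A →ₗ[ℂ] B) (hf : ∀ a : A, 0 ≤ a → 0 ≤ f a)
    {x : A} (hx : f (star x * x) = 0) (y : A) :
    f (star x * y) = 0 ∧ f (star y * x) = 0 := by
  -- Step 1: for every `y`, `0 ≤ f (star x * y) + f (star y * x)`.
  have hs : ∀ y : A, 0 ≤ f (star x * y) + f (star y * x) := by
    intro y
    have key : ∀ ε : ℝ, 0 < ε →
        0 ≤ f (star x * y) + f (star y * x) + (ε : ℂ) • f (star y * y) := by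
      intro ε hε
      set c : ℝ := Real.sqrt ε with hc
      have hc0 : 0 < c := Real.sqrt_pos.mpr hε
      have hcc : (c : ℂ) * c = (ε : ℂ) := by
        norm_cast; exact Real.mul_self_sqrt hε.le
      set z : A := ((c : ℂ)⁻¹) • x + (c : ℂ) • y with hz
      have hzpos : 0 ≤ f (star z * z) := hf _ (star_mul_self_nonneg z)
      have hstar : star z = ((c : ℂ)⁻¹) • star x + (c : ℂ) • star y := by
        simp only [hz, star_add, star_smul, Complex.star_def]
        rw [map_inv₀, Complex.conj_ofReal]
      have h1 : ((c : ℂ)⁻¹ * (c : ℂ)) = 1 := by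
        have hne : (c : ℂ) ≠ 0 := by exact_mod_cast hc0.ne'
        field_simp
      have h1' : ((c : ℂ) * (c : ℂ)⁻¹) = 1 := by rw [mul_comm]; exact h1
      have hexp : star z * z = ((c : ℂ)⁻¹ * (c : ℂ)⁻¹) • (star x * x)
          + star x * y + star y * x + (ε : ℂ) • (star y * y) := by
        rw [hstar, hz]
        simp only [add_mul, mul_add, smul_mul_smul_comm, h1, h1', hcc, one_smul]
        abel
      rw [hexp] at hzpos
      simpa [map_add, map_smul, hx] using hzpos
    -- pass to the limit `ε → 0⁺`
    have htend : Filter.Tendsto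
        (fun ε : ℝ => f (star x * y) + f (star y * x) + (ε : ℂ) • f (star y * y))
        (nhdsWithin 0 (Set.Ioi 0)) (nhds (f (star x * y) + f (star y * x))) := by
      have h0 : Filter.Tendsto
          (fun ε : ℝ => f (star x * y) + f (star y * x) + (ε : ℂ) • f (star y * y))
          (nhds 0) (nhds (f (star x * y) + f (star y * x) + ((0 : ℝ) : ℂ) • f (star y * y))) :=
        Filter.Tendsto.add tendsto_const_nhds
          ((Complex.continuous_ofReal.smul continuous_const).tendsto 0)
      simpa using h0.mono_left nhdsWithin_le_nhds
    refine ge_of_tendsto htend ?_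
    filter_upwards [self_mem_nhdsWithin] with t ht
    exact key t ht
  -- Step 2: the sum is in fact zero.
  have hsum : ∀ y : A, f (star x * y) + f (star y * x) = 0 := by
    intro y
    have h1 := hs y
    have h2 := hs (-y)
    rw [mul_neg, star_neg, neg_mul, map_neg, map_neg, ← neg_add, neg_nonneg] at h2
    exact le_antisymm h2 h1
  -- Step 3: use `i • y` to separate the two terms.
  have hI := hsum (Complex.I • y)
  simp only [mul_smul_comm, star_smul, Complex.star_def, Complex.conj_I, neg_smul, neg_mul,
    smul_mul_assoc, map_smul, map_neg, smul_neg] at hI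
  have heq : f (star x * y) = f (star y * x) := by
    have h : Complex.I • (f (star x * y) - f (star y * x)) = 0 := by
      rw [smul_sub, sub_eq_add_neg]; exact hI
    rcases smul_eq_zero.mp h with h | h
    · exact absurd h Complex.I_ne_zero
    · exact sub_eq_zero.mp h
  have h0 := hsum y
  rw [← heq] at h0
  have hxy : f (star x * y) = 0 := by
    have := h0
    rw [← two_smul ℂ] at this
    simpa using this
  exact ⟨hxy, heq ▸ hxy⟩

/-- If `f : A → B` is a positive linear map between unital C*-algebras and `p` is an effect
of `A` with `f (1 - p) = 0`, then `f a = f (p * a) = f (a * p) = f (p * a * p)` for all `a`. -/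
theorem positive_map_effect_carrier
    {A B : Type*} [CStarAlgebra A] [PartialOrder A] [StarOrderedRing A]
    [CStarAlgebra B] [PartialOrder B] [StarOrderedRing B]
    (f : A →ₗ[ℂ] B) (hf : ∀ a : A, 0 ≤ a → 0 ≤ f a)
    (p : A) (hp0 : 0 ≤ p) (hp1 : p ≤ 1) (hfp : f (1 - p) = 0) :
    ∀ a : A, f a = f (p * a) ∧ f a = f (a * p) ∧ f a = f (p * a * p) := by
  set q : A := 1 - p with hq
  have hq0 : 0 ≤ q := sub_nonneg.mpr hp1
  set g : A := CFC.sqrt q with hg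
  have hgsa : star g = g := (CFC.sqrt_nonneg (a := q)).isSelfAdjoint.star_eq
  have hgg : g * g = q := CFC.sqrt_mul_sqrt_self q hq0
  have hx : f (star g * g) = 0 := by rw [hgsa, hgg]; exact hfp
  have hzero : ∀ a : A, f (q * a) = 0 := by
    intro a
    have h := (positive_map_schwarz_zero f hf hx (g * a)).1
    rwa [hgsa, ← mul_assoc, hgg] at h
  have hzero' : ∀ a : A, f (a * q) = 0 := by
    intro a
    have h := (positive_map_schwarz_zero f hf hx (g * star a)).2
    rwa [star_mul, star_star, hgsa, mul_assoc, hgg] at h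
  intro a
  have h1 : f a = f (p * a) := by
    have h := hzero a
    rw [hq, sub_mul, one_mul, map_sub] at h
    exact sub_eq_zero.mp h
  have h2 : f a = f (a * p) := by
    have h := hzero' a
    rw [hq, mul_sub, mul_one, map_sub] at h
    exact sub_eq_zero.mp h
  have h3 : f (p * a) = f (p * a * p) := by
    have h := hzero' (p * a)
    rw [hq, mul_sub, mul_one, map_sub] at h
    exact sub_eq_zero.mp h
  exact ⟨h1, h2, h1.trans h3⟩
end

section
/- A bounded linear functional f : A → ℂ on a unital C*-algebra A is positive if and only if f(1) is a nonnegative real number and ‖f‖ ≤ f(1), where ‖f‖ is the operator norm. -/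
/-!
If `f` is positive, Cauchy–Schwarz for the semi-inner product `⟪a, b⟫ = f (star a * b)` gives
`|f x|² ≤ f 1 · f (star x * x) ≤ (f 1 · ‖x‖)²`. Conversely, if `‖f‖ ≤ f 1 = c`, then `f` is real
on selfadjoint `s`, since `|f (s + i t)|² ≤ c² (‖s‖² + t²)` for all real `t`; and for `0 ≤ a`
the element `‖a‖ - a` has norm at most `‖a‖`, whence `c ‖a‖ - f a ≤ c ‖a‖`.
-/

open scoped ComplexOrder

namespace PositiveLinearMap

variable {A : Type*} [CStarAlgebra A] [PartialOrder A] [StarOrderedRing A]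

lemma sq_norm_toPreGNS (f : A →ₚ[ℂ] ℂ) (a : A) :
    ‖f.toPreGNS a‖ ^ 2 = ‖f (star a * a)‖ := by
  have := congrArg norm (f.preGNS_norm_sq (f.toPreGNS a))
  rwa [ofPreGNS_toPreGNS, norm_pow, Complex.norm_real, norm_norm] at this

lemma norm_apply_le (f : A →ₚ[ℂ] ℂ) (x : A) : ‖f x‖ ≤ ‖f 1‖ * ‖x‖ := by
  have cauchy_schwarz := norm_inner_le_norm (𝕜 := ℂ) (f.toPreGNS 1) (f.toPreGNS x)
  rw [preGNS_inner_def, ofPreGNS_toPreGNS, ofPreGNS_toPreGNS, star_one, one_mul] at cauchy_schwarz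
  have h_one : ‖f.toPreGNS 1‖ ^ 2 = ‖f 1‖ := by rw [sq_norm_toPreGNS, star_one, one_mul]
  have h_x : ‖f.toPreGNS x‖ ^ 2 ≤ ‖f 1‖ * ‖x‖ ^ 2 := by
    rw [sq_norm_toPreGNS, sq, ← CStarRing.norm_star_mul_self]
    exact f.norm_apply_le_of_nonneg _ (star_mul_self_nonneg x)
  refine le_of_sq_le_sq ?_ (by positivity)
  calc ‖f x‖ ^ 2 ≤ ‖f.toPreGNS 1‖ ^ 2 * ‖f.toPreGNS x‖ ^ 2 := by
        rw [← mul_pow]; gcongr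
    _ ≤ (‖f 1‖ * ‖x‖) ^ 2 := by rw [h_one, mul_pow, sq ‖f 1‖, mul_assoc]; gcongr

end PositiveLinearMap

section

variable {A : Type*} [CStarAlgebra A]

lemma norm_algebraMap_le_abs (r : ℝ) : ‖algebraMap ℝ A r‖ ≤ |r| := by
  nontriviality A
  rw [norm_algebraMap', Real.norm_eq_abs]

lemma IsSelfAdjoint.sq_norm_add_algebraMap_mul_I_le {s : A} (hs : IsSelfAdjoint s) (t : ℝ) :
    ‖s + algebraMap ℂ A (t * Complex.I)‖ ^ 2 ≤ ‖s‖ ^ 2 + t ^ 2 := by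
  set z := algebraMap ℂ A (t * Complex.I)
  have hz_star : star z = -z := by
    rw [← algebraMap_star_comm, ← map_neg]; congr 1; simp
  have hz_sq : -(z * z) = algebraMap ℝ A (t ^ 2) := by
    rw [← map_mul, ← map_neg, IsScalarTower.algebraMap_apply ℝ ℂ A]
    congr 1; push_cast; ring_nf; simp
  have h_star_mul : star (s + z) * (s + z) = s * s + algebraMap ℝ A (t ^ 2) := by
    rw [star_add, hs.star_eq, hz_star, ← hz_sq, add_mul, mul_add, mul_add, neg_mul, neg_mul,
      Algebra.commutes]
    abel
  calc ‖s + z‖ ^ 2 = ‖s * s + algebraMap ℝ A (t ^ 2)‖ := by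
        rw [← h_star_mul, CStarRing.norm_star_mul_self, sq]
    _ ≤ ‖s * s‖ + ‖algebraMap ℝ A (t ^ 2)‖ := norm_add_le _ _
    _ ≤ ‖s‖ ^ 2 + t ^ 2 := by
        gcongr
        · exact sq ‖s‖ ▸ norm_mul_le s s
        · exact (norm_algebraMap_le_abs _).trans (abs_of_nonneg (sq_nonneg t)).le

end

namespace ContinuousLinearMap

variable {A : Type*} [CStarAlgebra A] (f : A →L[ℂ] ℂ) {c : ℝ}

lemma im_apply_eq_zero_of_isSelfAdjoint (h_one : f 1 = c) (hf : ‖f‖ ≤ c) {s : A}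
    (hs : IsSelfAdjoint s) : (f s).im = 0 := by
  set α := (f s).re
  set β := (f s).im
  have key (t : ℝ) : β ^ 2 + 2 * (β * c) * t ≤ c ^ 2 * ‖s‖ ^ 2 - α ^ 2 := by
    set x := s + algebraMap ℂ A (t * Complex.I)
    have hfx : ‖f x‖ ^ 2 = α ^ 2 + (β + t * c) ^ 2 := by
      rw [map_add, Algebra.algebraMap_eq_smul_one, map_smul, h_one, smul_eq_mul,
        Complex.sq_norm, Complex.normSq_apply]
      simp only [Complex.add_re, Complex.add_im, Complex.mul_re, Complex.mul_im,
        Complex.ofReal_re, Complex.ofReal_im, Complex.I_re, Complex.I_im]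
      ring
    have hc : 0 ≤ c := (norm_nonneg f).trans hf
    have : ‖f x‖ ^ 2 ≤ c ^ 2 * (‖s‖ ^ 2 + t ^ 2) := by
      calc ‖f x‖ ^ 2 ≤ (c * ‖x‖) ^ 2 := by
            gcongr; exact (f.le_opNorm x).trans (by gcongr)
        _ ≤ c ^ 2 * (‖s‖ ^ 2 + t ^ 2) := by
            rw [mul_pow]; gcongr; exact hs.sq_norm_add_algebraMap_mul_I_le t
    nlinarith
  have hβc : β * c = 0 := by
    by_contra h
    have := key ((c ^ 2 * ‖s‖ ^ 2 - α ^ 2 - β ^ 2 + 1) / (2 * (β * c)))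
    rw [mul_div_cancel₀ _ (mul_ne_zero two_ne_zero h)] at this
    linarith
  rcases mul_eq_zero.mp hβc with hβ | hc_zero
  · exact hβ
  · have := key 0
    rw [hc_zero] at this
    nlinarith

end ContinuousLinearMap

section

variable {A : Type*} [CStarAlgebra A] [PartialOrder A] [StarOrderedRing A]

lemma norm_algebraMap_norm_sub_le {a : A} (ha : 0 ≤ a) : ‖algebraMap ℝ A ‖a‖ - a‖ ≤ ‖a‖ := by
  have h_nonneg : 0 ≤ algebraMap ℝ A ‖a‖ - a :=
    sub_nonneg.mpr (IsSelfAdjoint.of_nonneg ha).le_algebraMap_norm_self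
  calc ‖algebraMap ℝ A ‖a‖ - a‖ ≤ ‖algebraMap ℝ A ‖a‖‖ :=
        CStarAlgebra.norm_le_norm_of_nonneg_of_le h_nonneg (sub_le_self _ ha)
    _ ≤ ‖a‖ := (norm_algebraMap_le_abs _).trans (abs_norm a).le

lemma ContinuousLinearMap.re_apply_nonneg_of_nonneg (f : A →L[ℂ] ℂ) {c : ℝ} (h_one : f 1 = c)
    (hf : ‖f‖ ≤ c) {a : A} (ha : 0 ≤ a) : 0 ≤ (f a).re := by
  have h_re : (f (algebraMap ℝ A ‖a‖ - a)).re = c * ‖a‖ - (f a).re := by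
    rw [map_sub, Algebra.algebraMap_eq_smul_one, f.map_smul_of_tower, h_one]
    simp [mul_comm]
  have hc : 0 ≤ c := (norm_nonneg f).trans hf
  have : c * ‖a‖ - (f a).re ≤ c * ‖a‖ := by
    calc c * ‖a‖ - (f a).re = (f (algebraMap ℝ A ‖a‖ - a)).re := h_re.symm
      _ ≤ ‖f‖ * ‖algebraMap ℝ A ‖a‖ - a‖ := (Complex.re_le_norm _).trans (f.le_opNorm _)
      _ ≤ c * ‖a‖ := by gcongr; exact norm_algebraMap_norm_sub_le ha
  linarith

end

/-- A bounded linear functional `f` on a unital C*-algebra is positive if and only if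
`f 1` is a nonnegative real number and `‖f‖ ≤ f 1`. -/
theorem positive_functional_iff_norm_le_apply_one
    {A : Type*} [CStarAlgebra A] [PartialOrder A] [StarOrderedRing A]
    (f : A →L[ℂ] ℂ) :
    (∀ a : A, 0 ≤ a → 0 ≤ f a) ↔ (0 ≤ f 1 ∧ ‖f‖ ≤ (f 1).re) := by
  constructor
  · intro hf
    have h_one : 0 ≤ f 1 := hf 1 zero_le_one
    refine ⟨h_one, f.opNorm_le_bound (Complex.nonneg_iff.mp h_one).1 fun x ↦ ?_⟩
    rw [Complex.re_eq_norm.mpr h_one]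
    exact (PositiveLinearMap.mk₀ f.toLinearMap hf).norm_apply_le x
  · rintro ⟨h_one, hf⟩ a ha
    have h_one_real : f 1 = (f 1).re :=
      Complex.eq_re_of_ofReal_le (r := 0) (by rwa [Complex.ofReal_zero])
    exact Complex.nonneg_iff.mpr ⟨f.re_apply_nonneg_of_nonneg h_one_real hf ha,
      (f.im_apply_eq_zero_of_isSelfAdjoint h_one_real hf (.of_nonneg ha)).symm⟩
end

section
/- Every extreme point u of the closed unit ball of a unital C*-algebra A is a partial isometry (u u* u = u) satisfying (1 − u u*) · a · (1 − u* u) = 0 for all a ∈ A. -/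
/-!
Write `h = u⋆u`. Perturbing `u` by `±½ u (1 - h)` keeps it in the unit ball, since
`t (1 ± (1 - t) / 2)² ≤ 1` for `0 ≤ t ≤ 1`; extremality then forces `u (1 - h) = 0`, that is,
`u u⋆ u = u`. Now `u u⋆` and `u⋆u` are projections, and for `‖a‖ ≤ 1` the element
`b = (1 - u u⋆) a (1 - u⋆u)` satisfies `u⋆b = 0` and `b⋆b ≤ 1 - u⋆u`, so that
`(u ± b)⋆(u ± b) = u⋆u + b⋆b ≤ 1`; extremality again gives `b = 0`.
-/

lemma eq_zero_of_mem_extremePoints_of_add_mem_of_sub_mem {𝕜 E : Type*} [Field 𝕜] [LinearOrder 𝕜]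
    [IsStrictOrderedRing 𝕜] [AddCommGroup E] [Module 𝕜 E] {s : Set E} {x z : E}
    (hx : x ∈ s.extremePoints 𝕜) (h₁ : x + z ∈ s) (h₂ : x - z ∈ s) : z = 0 := by
  have hseg : x ∈ openSegment 𝕜 (x + z) (x - z) :=
    ⟨2⁻¹, 2⁻¹, by norm_num, by norm_num, by norm_num, by module⟩
  simpa using hx.2 h₁ h₂ hseg

def IsPartialIsometry {R : Type*} [Mul R] [Star R] (u : R) : Prop := u * star u * u = u

namespace IsPartialIsometry

variable {R : Type*} [Ring R] [StarRing R] {u : R}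

lemma isStarProjection_star_mul_self (hu : IsPartialIsometry u) :
    IsStarProjection (star u * u) where
  isIdempotentElem := by
    rw [IsIdempotentElem, mul_assoc, ← mul_assoc u, hu]
  isSelfAdjoint := .star_mul_self u

lemma isStarProjection_mul_star_self (hu : IsPartialIsometry u) :
    IsStarProjection (u * star u) where
  isIdempotentElem := by
    rw [IsIdempotentElem, ← mul_assoc, hu]
  isSelfAdjoint := .mul_star_self u

lemma star_mul_one_sub_mul_star_self (hu : IsPartialIsometry u) :
    star u * (1 - u * star u) = 0 := by
  have : star u * u * star u = star u := by
    simpa [mul_assoc] using congrArg star hu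
  rw [mul_sub, mul_one, ← mul_assoc, this, sub_self]

end IsPartialIsometry

section CStarAlgebra

variable {A : Type*} [CStarAlgebra A] [PartialOrder A] [StarOrderedRing A]

lemma norm_le_one_iff_star_mul_self_le_one (x : A) : ‖x‖ ≤ 1 ↔ star x * x ≤ 1 := by
  rw [← CStarAlgebra.norm_le_one_iff_of_nonneg (star x * x), CStarRing.norm_star_mul_self,
    ← sq, sq_le_one_iff₀ (norm_nonneg x)]

lemma one_add_half_smul_mul_one_sub_mul_le_one {q : A} (hq : 0 ≤ q) :
    (1 + (2⁻¹ : ℝ) • q) * (1 - q) * (1 + (2⁻¹ : ℝ) • q) ≤ 1 := by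
  have hq2 : 0 ≤ q * q := hq.isSelfAdjoint.mul_self_nonneg
  have hq3 : 0 ≤ q * q * q := conjugate_nonneg_of_nonneg hq hq
  rw [← sub_nonneg]
  convert add_nonneg (smul_nonneg (by norm_num : (0:ℝ) ≤ 3/4) hq2)
    (smul_nonneg (by norm_num : (0:ℝ) ≤ 1/4) hq3) using 1
  simp only [smul_mul_assoc, mul_smul_comm, smul_sub, sub_mul, mul_sub, add_mul, mul_add,
    mul_one, one_mul, mul_assoc]
  module

lemma one_sub_half_smul_mul_one_sub_mul_le_one {q : A} (hq : 0 ≤ q) :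
    (1 - (2⁻¹ : ℝ) • q) * (1 - q) * (1 - (2⁻¹ : ℝ) • q) ≤ 1 := by
  have hr : IsSelfAdjoint (q - (5 / 2 : ℝ) • 1) :=
    hq.isSelfAdjoint.sub (.smul (.all _) (.one A))
  rw [← sub_nonneg]
  convert add_nonneg (smul_nonneg (by norm_num : (0:ℝ) ≤ 1/4) (hr.conjugate_nonneg hq))
    (smul_nonneg (by norm_num : (0:ℝ) ≤ 7/16) hq) using 1
  simp only [smul_mul_assoc, mul_smul_comm, smul_smul, smul_sub, sub_mul, mul_sub, mul_one,
    one_mul, mul_assoc]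
  module

lemma norm_mul_le_one_of_isSelfAdjoint {u g : A} (hg : IsSelfAdjoint g)
    (h : g * (star u * u) * g ≤ 1) : ‖u * g‖ ≤ 1 := by
  rw [norm_le_one_iff_star_mul_self_le_one, star_mul, hg.star_eq]
  simpa only [mul_assoc] using h

lemma norm_add_and_sub_half_smul_mul_one_sub_star_mul_self_le_one {u : A} (hu : ‖u‖ ≤ 1) :
    ‖u + (2⁻¹ : ℝ) • (u * (1 - star u * u))‖ ≤ 1 ∧
      ‖u - (2⁻¹ : ℝ) • (u * (1 - star u * u))‖ ≤ 1 := by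
  set q := 1 - star u * u
  have hq : 0 ≤ q := sub_nonneg.2 ((norm_le_one_iff_star_mul_self_le_one u).1 hu)
  have huq : star u * u = 1 - q := (sub_sub_cancel _ _).symm
  have hq' : IsSelfAdjoint ((2⁻¹ : ℝ) • q) := .smul (.all _) hq.isSelfAdjoint
  constructor
  · rw [← mul_smul_comm, ← mul_one_add]
    refine norm_mul_le_one_of_isSelfAdjoint ((IsSelfAdjoint.one A).add hq') ?_
    rw [huq]
    exact one_add_half_smul_mul_one_sub_mul_le_one hq
  · rw [← mul_smul_comm, ← mul_one_sub]
    refine norm_mul_le_one_of_isSelfAdjoint ((IsSelfAdjoint.one A).sub hq') ?_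
    rw [huq]
    exact one_sub_half_smul_mul_one_sub_mul_le_one hq

lemma IsStarProjection.star_mul_self_le {p e a : A} (hp : IsStarProjection p)
    (he : IsStarProjection e) (ha : ‖a‖ ≤ 1) : star (p * a * e) * (p * a * e) ≤ e := by
  have hconj : star (p * a * e) * (p * a * e) = e * (star a * p * a) * e := by
    simp only [star_mul, hp.isSelfAdjoint.star_eq, he.isSelfAdjoint.star_eq, mul_assoc,
      ← mul_assoc p p, hp.isIdempotentElem.eq]
  calc star (p * a * e) * (p * a * e) = e * (star a * p * a) * e := hconj
    _ ≤ e * (star a * 1 * a) * e :=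
      he.isSelfAdjoint.conjugate_le_conjugate (star_left_conjugate_le_conjugate hp.le_one a)
    _ ≤ e * 1 * e := by
      rw [mul_one]
      exact he.isSelfAdjoint.conjugate_le_conjugate
        ((norm_le_one_iff_star_mul_self_le_one a).1 ha)
    _ = e := by rw [mul_one, he.isIdempotentElem.eq]

lemma norm_add_le_one_of_star_mul_eq_zero {u b : A} (hub : star u * b = 0)
    (hb : star b * b ≤ 1 - star u * u) : ‖u + b‖ ≤ 1 := by
  have hbu : star b * u = 0 := by simpa using congrArg star hub
  rw [norm_le_one_iff_star_mul_self_le_one, star_add, add_mul, mul_add, mul_add, hub, hbu,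
    add_zero, zero_add, ← le_sub_iff_add_le']
  exact hb

lemma IsPartialIsometry.norm_add_le_one {u a : A} (hu : IsPartialIsometry u) (ha : ‖a‖ ≤ 1) :
    ‖u + (1 - u * star u) * a * (1 - star u * u)‖ ≤ 1 := by
  refine norm_add_le_one_of_star_mul_eq_zero ?_ ?_
  · rw [← mul_assoc, ← mul_assoc, hu.star_mul_one_sub_mul_star_self, zero_mul, zero_mul]
  · exact hu.isStarProjection_mul_star_self.one_sub.star_mul_self_le
      hu.isStarProjection_star_mul_self.one_sub ha

end CStarAlgebra

/-- Every extreme point `u` of the closed unit ball of a unital C*-algebra is a partial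
isometry satisfying `(1 - u u*) a (1 - u* u) = 0` for all `a`. -/
theorem extreme_point_unit_ball_partial_isometry
    {A : Type*} [CStarAlgebra A] (u : A)
    (hu : u ∈ Set.extremePoints ℝ {a : A | ‖a‖ ≤ 1}) :
    u * star u * u = u ∧ ∀ a : A, (1 - u * star u) * a * (1 - star u * u) = 0 := by
  let := CStarAlgebra.spectralOrder A
  have := CStarAlgebra.spectralOrderedRing A
  have hpi : IsPartialIsometry u := by
    obtain ⟨h₁, h₂⟩ := norm_add_and_sub_half_smul_mul_one_sub_star_mul_self_le_one hu.1
    have h := eq_zero_of_mem_extremePoints_of_add_mem_of_sub_mem hu h₁ h₂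
    rw [smul_eq_zero_iff_right (by norm_num), mul_sub, mul_one, sub_eq_zero] at h
    rw [IsPartialIsometry, mul_assoc, h.symm]
  refine ⟨hpi, fun a => ?_⟩
  have hc : ‖(1 + ‖a‖)⁻¹ • a‖ ≤ 1 := by
    rw [norm_smul, Real.norm_of_nonneg (by positivity), inv_mul_le_one₀ (by positivity)]
    linarith
  have h₁ := hpi.norm_add_le_one hc
  have h₂ := hpi.norm_add_le_one (a := -((1 + ‖a‖)⁻¹ • a)) (by rwa [norm_neg])
  rw [mul_neg, neg_mul, ← sub_eq_add_neg] at h₂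
  have h := eq_zero_of_mem_extremePoints_of_add_mem_of_sub_mem hu h₁ h₂
  rwa [mul_smul_comm, smul_mul_assoc, smul_eq_zero_iff_right (by positivity)] at h
end

section
/- Let A be a unital C*-algebra, H and K complex Hilbert spaces, ρ : A → B(H) and π : A → B(K) unital star-algebra homomorphisms into the bounded operators, and let x ∈ H and y ∈ K satisfy ⟨x, ρ(a)x⟩ = ⟨y, π(a)y⟩ for all a ∈ A. Then there is a bounded operator U : K → H such that U ∘ U* is the orthogonal projection onto the closure of {ρ(a)x : a ∈ A}, U* ∘ U is the orthogonal projection onto the closure of {π(a)y : a ∈ A}, and U ∘ π(a) = ρ(a) ∘ U for all a ∈ A. -/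
open scoped InnerProductSpace

/-- `P` is the orthogonal projection onto the set `S` (necessarily a closed subspace):
`P` is a self-adjoint idempotent bounded operator with range `S`. -/
def IsOrthogonalProjectionOnto
    {H : Type*} [NormedAddCommGroup H] [InnerProductSpace ℂ H] [CompleteSpace H]
    (P : H →L[ℂ] H) (S : Set H) : Prop :=
  ContinuousLinearMap.adjoint P = P ∧ P ∘L P = P ∧ Set.range P = S

/-!
Since `⟪ρ a x, ρ b x⟫ = ⟪x, ρ (star a * b) x⟫`, the state `a ↦ ⟪x, ρ a x⟫` determines
the Gram matrix of the orbit of `x`. Hence `π a y ↦ ρ a x` is a well-defined isometry from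
the orbit of `y` onto the orbit of `x`; extending it to the closure and by zero on the
orthogonal complement gives a partial isometry `U` with initial space `closure {π a y}` and
final space `closure {ρ a x}`. It intertwines `π` with `ρ` on the orbit of `y` because
`U (π a (π b y)) = ρ (a * b) x`, and on the orthogonal complement of the orbit because that
complement is `π`-invariant (`π` preserves adjoints).
-/

open scoped InnerProduct
open ContinuousLinearMap Submodule

section OrthogonalProjection

variable {E F : Type*} [NormedAddCommGroup E] [InnerProductSpace ℂ E] [CompleteSpace E]
  [NormedAddCommGroup F] [InnerProductSpace ℂ F] [CompleteSpace F]

theorem isOrthogonalProjectionOnto_starProjection (N : Submodule ℂ E)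
    [N.HasOrthogonalProjection] :
    IsOrthogonalProjectionOnto N.starProjection N :=
  ⟨(isSelfAdjoint_starProjection N).adjoint_eq, N.isIdempotentElem_starProjection,
    congrArg SetLike.coe N.range_starProjection⟩

theorem isOrthogonalProjectionOnto_comp_adjoint {W : E →L[ℂ] F} (hW : W† ∘L W = 1) :
    IsOrthogonalProjectionOnto (W ∘L W†) (Set.range W) := by
  refine ⟨by rw [adjoint_comp, adjoint_adjoint], ?_, ?_⟩
  · rw [comp_assoc, ← comp_assoc (W†), hW]; rfl
  · refine subset_antisymm (Set.range_comp_subset_range (W†) W) ?_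
    rintro _ ⟨v, rfl⟩
    exact ⟨W v, by rw [comp_apply, ← comp_apply (W†), hW]; rfl⟩

end OrthogonalProjection

theorem ContinuousLinearMap.eq_of_eqOn_of_eqOn_orthogonal {𝕜 E F : Type*} [RCLike 𝕜]
    [NormedAddCommGroup E] [InnerProductSpace 𝕜 E] [CompleteSpace E]
    [NormedAddCommGroup F] [NormedSpace 𝕜 F] {S : Submodule 𝕜 E} {T₁ T₂ : E →L[𝕜] F}
    (hS : ∀ v ∈ S, T₁ v = T₂ v) (hSperp : ∀ v ∈ Sᗮ, T₁ v = T₂ v) :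
    T₁ = T₂ := by
  have hker : ∀ v, T₁ v = T₂ v → v ∈ (T₁ - T₂).ker := fun v hv => by
    rw [LinearMap.mem_ker, coe_coe, sub_apply, hv, sub_self]
  have hclosure : S.topologicalClosure ≤ (T₁ - T₂).ker :=
    S.topologicalClosure_minimal (fun v hv => hker v (hS v hv)) (T₁ - T₂).isClosed_ker
  have horth : S.topologicalClosureᗮ ≤ (T₁ - T₂).ker := by
    rw [orthogonal_closure]
    exact fun v hv => hker v (hSperp v hv)
  have htop := sup_le hclosure horth
  rw [sup_orthogonal_of_hasOrthogonalProjection, top_le_iff] at htop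
  ext v
  have hv : v ∈ (T₁ - T₂).ker := htop ▸ mem_top
  rwa [LinearMap.mem_ker, coe_coe, sub_apply, sub_eq_zero] at hv

namespace LinearMap

section IsometricExtension

variable {𝕜 M E F : Type*} [RCLike 𝕜] [AddCommGroup M] [Module 𝕜 M]
  [NormedAddCommGroup E] [NormedSpace 𝕜 E]

def toRangeClosure (g : M →ₗ[𝕜] E) : M →ₗ[𝕜] (range g).topologicalClosure :=
  g.codRestrict _ fun a => le_topologicalClosure _ (mem_range_self g a)

theorem denseRange_toRangeClosure (g : M →ₗ[𝕜] E) : DenseRange g.toRangeClosure := by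
  rw [DenseRange, Subtype.dense_iff, ← Set.range_comp]
  exact (topologicalClosure_coe _).subset

variable [NormedAddCommGroup F] [NormedSpace 𝕜 F] [CompleteSpace F]
  {f : M →ₗ[𝕜] F} {g : M →ₗ[𝕜] E}

theorem extendOfNorm_toRangeClosure_apply (hfg : ∀ a, ‖f a‖ = ‖g a‖) (a : M) :
    f.extendOfNorm g.toRangeClosure (g.toRangeClosure a) = f a :=
  extendOfNorm_eq g.denseRange_toRangeClosure ⟨1, fun a => (hfg a).trans_le (one_mul _).ge⟩ a

theorem norm_extendOfNorm_toRangeClosure_apply (hfg : ∀ a, ‖f a‖ = ‖g a‖)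
    (v : (range g).topologicalClosure) :
    ‖f.extendOfNorm g.toRangeClosure v‖ = ‖v‖ :=
  g.denseRange_toRangeClosure.induction_on v
    (isClosed_eq (continuous_norm.comp (ContinuousLinearMap.continuous _)) continuous_norm)
    fun a => by rw [extendOfNorm_toRangeClosure_apply hfg]; exact hfg a

theorem range_extendOfNorm_toRangeClosure [CompleteSpace E] (hfg : ∀ a, ‖f a‖ = ‖g a‖) :
    Set.range (f.extendOfNorm g.toRangeClosure) = closure (Set.range f) := by
  set W := f.extendOfNorm g.toRangeClosure
  have hW : W ∘ g.toRangeClosure = f := funext (extendOfNorm_toRangeClosure_apply hfg)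
  refine subset_antisymm ?_ (closure_minimal ?_ ?_)
  · simpa only [← Set.range_comp, hW] using
      W.continuous.range_subset_closure_image_dense g.denseRange_toRangeClosure
  · exact hW ▸ Set.range_comp_subset_range _ _
  · exact (AddMonoidHomClass.isometry_of_norm W
      (norm_extendOfNorm_toRangeClosure_apply hfg)).isClosedEmbedding.isClosed_range

end IsometricExtension

section PartialIsometry

variable {𝕜 M E F : Type*} [RCLike 𝕜] [AddCommGroup M] [Module 𝕜 M]
  [NormedAddCommGroup E] [InnerProductSpace 𝕜 E] [CompleteSpace E]
  [NormedAddCommGroup F] [InnerProductSpace 𝕜 F] [CompleteSpace F]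
  {f : M →ₗ[𝕜] F} {g : M →ₗ[𝕜] E}

/-- The partial isometry with initial space `closure (range g)` sending `g a` to `f a`; it is only
meaningful when `‖f a‖ = ‖g a‖` for all `a`. -/
noncomputable def partialIsometry (f : M →ₗ[𝕜] F) (g : M →ₗ[𝕜] E) : E →L[𝕜] F :=
  f.extendOfNorm g.toRangeClosure ∘L (range g).topologicalClosure.orthogonalProjectionOnto

theorem partialIsometry_apply (hfg : ∀ a, ‖f a‖ = ‖g a‖) (a : M) :
    f.partialIsometry g (g a) = f a := by
  have hproj : (range g).topologicalClosure.orthogonalProjectionOnto (g a) = g.toRangeClosure a :=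
    orthogonalProjectionOnto_mem_subspace_eq_self (g.toRangeClosure a)
  rw [partialIsometry, ContinuousLinearMap.comp_apply, hproj,
    extendOfNorm_toRangeClosure_apply hfg]

theorem partialIsometry_apply_of_mem_orthogonal {v : E} (hv : v ∈ (range g)ᗮ) :
    f.partialIsometry g v = 0 := by
  rw [← orthogonal_closure] at hv
  rw [partialIsometry, ContinuousLinearMap.comp_apply,
    orthogonalProjectionOnto_apply_of_mem_orthogonal hv, map_zero]

theorem adjoint_comp_extendOfNorm_toRangeClosure (hfg : ∀ a, ‖f a‖ = ‖g a‖) :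
    (f.extendOfNorm g.toRangeClosure)† ∘L f.extendOfNorm g.toRangeClosure = 1 :=
  (norm_map_iff_adjoint_comp_self _).mp (norm_extendOfNorm_toRangeClosure_apply hfg)

theorem adjoint_comp_partialIsometry (hfg : ∀ a, ‖f a‖ = ‖g a‖) :
    (f.partialIsometry g)† ∘L f.partialIsometry g =
      (range g).topologicalClosure.starProjection := by
  rw [partialIsometry, ContinuousLinearMap.adjoint_comp, adjoint_orthogonalProjectionOnto,
    ContinuousLinearMap.comp_assoc,
    ← ContinuousLinearMap.comp_assoc _ _ (orthogonalProjectionOnto _),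
    adjoint_comp_extendOfNorm_toRangeClosure hfg]
  rfl

theorem partialIsometry_comp_adjoint :
    f.partialIsometry g ∘L (f.partialIsometry g)† =
      f.extendOfNorm g.toRangeClosure ∘L (f.extendOfNorm g.toRangeClosure)† := by
  have hproj : orthogonalProjectionOnto (range g).topologicalClosure ∘L
      (range g).topologicalClosure.subtypeL = 1 :=
    ContinuousLinearMap.ext orthogonalProjectionOnto_mem_subspace_eq_self
  rw [partialIsometry, ContinuousLinearMap.adjoint_comp, adjoint_orthogonalProjectionOnto,
    ContinuousLinearMap.comp_assoc, ← ContinuousLinearMap.comp_assoc _ (subtypeL _), hproj]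
  rfl

end PartialIsometry

section ComplexPartialIsometry

variable {M E F : Type*} [AddCommGroup M] [Module ℂ M]
  [NormedAddCommGroup E] [InnerProductSpace ℂ E] [CompleteSpace E]
  [NormedAddCommGroup F] [InnerProductSpace ℂ F] [CompleteSpace F]
  {f : M →ₗ[ℂ] F} {g : M →ₗ[ℂ] E}

theorem isOrthogonalProjectionOnto_adjoint_comp_partialIsometry
    (hfg : ∀ a, ‖f a‖ = ‖g a‖) :
    IsOrthogonalProjectionOnto ((f.partialIsometry g)† ∘L f.partialIsometry g)
      (closure (Set.range g)) := by
  rw [adjoint_comp_partialIsometry hfg, ← coe_range, ← topologicalClosure_coe]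
  exact isOrthogonalProjectionOnto_starProjection _

theorem isOrthogonalProjectionOnto_partialIsometry_comp_adjoint
    (hfg : ∀ a, ‖f a‖ = ‖g a‖) :
    IsOrthogonalProjectionOnto (f.partialIsometry g ∘L (f.partialIsometry g)†)
      (closure (Set.range f)) := by
  rw [partialIsometry_comp_adjoint, ← range_extendOfNorm_toRangeClosure hfg]
  exact isOrthogonalProjectionOnto_comp_adjoint (adjoint_comp_extendOfNorm_toRangeClosure hfg)

end ComplexPartialIsometry

end LinearMap

section Orbit

variable {𝕜 A H K : Type*} [RCLike 𝕜] [Ring A] [Algebra 𝕜 A] [Star A]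
  [NormedAddCommGroup H] [InnerProductSpace 𝕜 H] [CompleteSpace H]
  [NormedAddCommGroup K] [InnerProductSpace 𝕜 K] [CompleteSpace K]
  (ρ : A →⋆ₐ[𝕜] (H →L[𝕜] H)) (x : H)

noncomputable def orbitMap : A →ₗ[𝕜] H :=
  (ContinuousLinearMap.apply 𝕜 H x).toLinearMap ∘ₗ ρ.toAlgHom.toLinearMap

@[simp]
theorem orbitMap_apply (a : A) : orbitMap ρ x a = ρ a x := rfl

theorem orbitMap_mul (a b : A) : orbitMap ρ x (a * b) = ρ a (orbitMap ρ x b) := by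
  rw [orbitMap_apply, orbitMap_apply, map_mul, mul_apply_eq_comp]

theorem inner_orbitMap_orbitMap (a b : A) :
    ⟪orbitMap ρ x a, orbitMap ρ x b⟫_𝕜 = ⟪x, ρ (star a * b) x⟫_𝕜 := by
  rw [orbitMap_apply, orbitMap_apply, ← adjoint_inner_right, ← star_eq_adjoint, ← map_star,
    map_mul, mul_apply_eq_comp]

theorem apply_mem_orthogonal_range_orbitMap {v : H}
    (hv : v ∈ (LinearMap.range (orbitMap ρ x))ᗮ) (a : A) :
    ρ a v ∈ (LinearMap.range (orbitMap ρ x))ᗮ := by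
  rw [mem_orthogonal]
  rintro _ ⟨b, rfl⟩
  rw [← adjoint_inner_left, ← star_eq_adjoint, ← map_star, ← orbitMap_mul]
  exact inner_right_of_mem_orthogonal (LinearMap.mem_range_self _ _) hv

variable {ρ x} {π : A →⋆ₐ[𝕜] (K →L[𝕜] K)} {y : K}

theorem norm_orbitMap_eq (hxy : ∀ a, ⟪x, ρ a x⟫_𝕜 = ⟪y, π a y⟫_𝕜) (a : A) :
    ‖orbitMap ρ x a‖ = ‖orbitMap π y a‖ := by
  rw [norm_eq_sqrt_re_inner (𝕜 := 𝕜), norm_eq_sqrt_re_inner (𝕜 := 𝕜),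
    inner_orbitMap_orbitMap, inner_orbitMap_orbitMap, hxy]

theorem partialIsometry_orbitMap_comp (hxy : ∀ a, ⟪x, ρ a x⟫_𝕜 = ⟪y, π a y⟫_𝕜)
    (a : A) :
    (orbitMap ρ x).partialIsometry (orbitMap π y) ∘L π a =
      ρ a ∘L (orbitMap ρ x).partialIsometry (orbitMap π y) := by
  refine eq_of_eqOn_of_eqOn_orthogonal (S := LinearMap.range (orbitMap π y)) ?_ ?_
  · rintro _ ⟨b, rfl⟩
    simp only [comp_apply, ← orbitMap_mul, LinearMap.partialIsometry_apply (norm_orbitMap_eq hxy)]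
  · intro v hv
    rw [comp_apply, comp_apply, LinearMap.partialIsometry_apply_of_mem_orthogonal hv, map_zero,
      LinearMap.partialIsometry_apply_of_mem_orthogonal
        (apply_mem_orthogonal_range_orbitMap π y hv a)]

end Orbit

/-- Two cyclic representations with the same associated state are intertwined by a
partial isometry: if `⟨x, ρ(a)x⟩ = ⟨y, π(a)y⟩` for all `a`, then there is a bounded operator
`U : K → H` with `U U*` the orthogonal projection onto the closure of `{ρ(a)x : a}`,
`U* U` the orthogonal projection onto the closure of `{π(a)y : a}`, and `U π(a) = ρ(a) U`. -/
theorem gns_intertwiner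
    {A : Type*} [CStarAlgebra A]
    {H K : Type*} [NormedAddCommGroup H] [InnerProductSpace ℂ H] [CompleteSpace H]
    [NormedAddCommGroup K] [InnerProductSpace ℂ K] [CompleteSpace K]
    (ρ : A →⋆ₐ[ℂ] (H →L[ℂ] H)) (π : A →⋆ₐ[ℂ] (K →L[ℂ] K))
    (x : H) (y : K) (hxy : ∀ a : A, ⟪x, ρ a x⟫_ℂ = ⟪y, π a y⟫_ℂ) :
    ∃ U : K →L[ℂ] H,
      IsOrthogonalProjectionOnto (U ∘L ContinuousLinearMap.adjoint U)
        (closure (Set.range fun a : A => ρ a x)) ∧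
      IsOrthogonalProjectionOnto (ContinuousLinearMap.adjoint U ∘L U)
        (closure (Set.range fun a : A => π a y)) ∧
      ∀ a : A, U ∘L π a = ρ a ∘L U :=
  ⟨(orbitMap ρ x).partialIsometry (orbitMap π y),
    LinearMap.isOrthogonalProjectionOnto_partialIsometry_comp_adjoint (norm_orbitMap_eq hxy),
    LinearMap.isOrthogonalProjectionOnto_adjoint_comp_partialIsometry (norm_orbitMap_eq hxy),
    partialIsometry_orbitMap_comp hxy⟩
end
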